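/- arXiv:1710.03284 — 9 statements merged into one kernel-verified Lean document; each statement's English description precedes it below -/
import Mathlib

section
/- Let 1 ≤ N < L be integers and let z, z′ be nonzero complex numbers with z^L ≠ (z′)^L. Let w_1,…,w_N ∈ ℂ satisfy w_j^N (w_j+1)^{L−N} = z^L for every j, and let w′_1,…,w′_N ∈ ℂ satisfy (w′_j)^N (w′_j+1)^{L−N} = (z′)^L for every j. Assume ∏_{j=1}^N |w′_j+1| < ∏_{j=1}^N |w_j+1|. Then for every k with 1 ≤ k ≤ N and every integer a, ∑_{X ∈ 𝒳_N(L), x_k ≥ a} R_X(W)·L_X(W′) = (z/z′)^{(k−1)L} · ∏_{j=1}^N ( (w_j+1) w′_j / ( w_j (w′_j+1) ) )^{k−1} · ∑_{X ∈ 𝒳_N(L), x_1 ≥ a} R_X(W)·L_X(W′), where both families are summable and the sums are their (t)sums. -/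
open scoped BigOperators

/-- The configuration space `𝒳_N(L)`: strictly increasing `N`-tuples of integers
whose entries all lie within a window of length `L` (equivalently,
`x_1 < x_2 < ⋯ < x_N < x_1 + L`). -/
def XNL (N L : ℕ) : Set (Fin N → ℤ) :=
  {X | StrictMono X ∧ ∀ i j, X i < X j + (L : ℤ)}

/-- `L_X(W) = det[w_i^j (w_i+1)^{x_j - j}]_{i,j=1}^N` (1-based indices, integer powers). -/
noncomputable def LXdet {N : ℕ} (X : Fin N → ℤ) (w : Fin N → ℂ) : ℂ :=
  Matrix.det (Matrix.of fun i j : Fin N =>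
    w i ^ (((j : ℕ) : ℤ) + 1) * (w i + 1) ^ (X j - (((j : ℕ) : ℤ) + 1)))

/-- `R_X(W) = det[w_i^{-j} (w_i+1)^{-x_j + j}]_{i,j=1}^N` (1-based indices, integer powers). -/
noncomputable def RXdet {N : ℕ} (X : Fin N → ℤ) (w : Fin N → ℂ) : ℂ :=
  Matrix.det (Matrix.of fun i j : Fin N =>
    w i ^ (-(((j : ℕ) : ℤ) + 1)) * (w i + 1) ^ (-(X j) + (((j : ℕ) : ℤ) + 1)))

/-!
The cyclic shift `T (x₁, …, x_N) = (x₂, …, x_N, x₁ + L)` is a bijection of `𝒳_N(L)` carrying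
`{x_{k+1} ≥ a}` onto `{x_k ≥ a}`. On the determinant matrices, `T` permutes the columns cyclically
up to row factors and, thanks to the Bethe equations `w^N (w + 1)^(L - N) = z^L`, one extra column
factor, so `R_X(W) L_X(W') = c · R_{TX}(W) L_{TX}(W')` with
`c = (z/z')^L ∏ (w_j + 1) w'_j / (w_j (w'_j + 1))`; iterating gives the factor `c^(k-1)`.
Summability on `{x₁ ≥ a}`: translating `X` by `m` multiplies the summand by `r^m` with
`r = ∏ (w'_j + 1)/(w_j + 1)`, `‖r‖ < 1`, and there are finitely many configurations with `x₁` fixed.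
-/

def cycShift {n : ℕ} (L : ℕ) (X : Fin (n + 1) → ℤ) : Fin (n + 1) → ℤ :=
  Fin.snoc (α := fun _ => ℤ) (Fin.tail X) (X 0 + L)

@[simp] lemma cycShift_castSucc {n L : ℕ} (X : Fin (n + 1) → ℤ) (i : Fin n) :
    cycShift L X i.castSucc = X i.succ := by
  simp [cycShift, Fin.tail]

@[simp] lemma cycShift_last {n L : ℕ} (X : Fin (n + 1) → ℤ) :
    cycShift L X (Fin.last n) = X 0 + L := by
  simp [cycShift]

def cycShiftEquiv (n L : ℕ) : (Fin (n + 1) → ℤ) ≃ (Fin (n + 1) → ℤ) where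
  toFun := cycShift L
  invFun Y := Fin.cons (Y (Fin.last n) - L) (Fin.init Y)
  left_inv X := by simp [cycShift, Fin.init_snoc]
  right_inv Y := by simp [cycShift]

lemma cycShift_mem_XNL {n L : ℕ} {X : Fin (n + 1) → ℤ} (hX : X ∈ XNL (n + 1) L) :
    cycShift L X ∈ XNL (n + 1) L := by
  obtain ⟨hmono, hwin⟩ := hX
  have hL : (0 : ℤ) < L := by linarith [hwin 0 0]
  refine ⟨fun i j hij => ?_, fun i j => ?_⟩
  · induction j using Fin.lastCases with
    | last =>
      obtain ⟨i, rfl⟩ := Fin.exists_castSucc_eq.2 (Fin.ne_last_of_lt hij)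
      simpa using hwin i.succ 0
    | cast j =>
      induction i using Fin.lastCases with
      | last => exact absurd hij (not_lt.2 (Fin.le_last _))
      | cast i =>
        simpa using hmono (Fin.succ_lt_succ_iff.2 (Fin.castSucc_lt_castSucc_iff.1 hij))
  · induction i using Fin.lastCases <;> induction j using Fin.lastCases
    · simpa using hL
    · simpa using hmono (Fin.succ_pos _)
    · simpa using (hwin _ 0).trans (lt_add_of_pos_right _ hL)
    · simpa using hwin _ _

lemma cycShiftEquiv_symm_mem_XNL {n L : ℕ} {Y : Fin (n + 1) → ℤ} (hY : Y ∈ XNL (n + 1) L) :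
    (cycShiftEquiv n L).symm Y ∈ XNL (n + 1) L := by
  obtain ⟨hmono, hwin⟩ := hY
  have hL : (0 : ℤ) < L := by linarith [hwin 0 0]
  simp only [cycShiftEquiv, Equiv.coe_fn_symm_mk]
  refine ⟨fun i j hij => ?_, fun i j => ?_⟩
  · induction j using Fin.cases with
    | zero => exact absurd hij (Fin.not_lt_zero _)
    | succ j =>
      induction i using Fin.cases with
      | zero => simpa [Fin.init] using sub_lt_iff_lt_add.2 (hwin (Fin.last n) j.castSucc)
      | succ i =>
        simpa [Fin.init] using
          hmono (Fin.castSucc_lt_castSucc_iff.2 (Fin.succ_lt_succ_iff.1 hij))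
  · induction i using Fin.cases <;> induction j using Fin.cases
    · simpa using hL
    · rename_i j
      simp only [Fin.cons_zero, Fin.cons_succ, Fin.init]
      linarith [hwin (Fin.last n) j.castSucc]
    · simpa [Fin.init] using hmono (Fin.castSucc_lt_last _)
    · simpa [Fin.init] using hwin _ _

lemma cycShift_mem_XNL_iff {n L : ℕ} {X : Fin (n + 1) → ℤ} :
    cycShift L X ∈ XNL (n + 1) L ↔ X ∈ XNL (n + 1) L :=
  ⟨fun h => (cycShiftEquiv n L).symm_apply_apply X ▸ cycShiftEquiv_symm_mem_XNL h,
    cycShift_mem_XNL⟩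

lemma add_const_mem_XNL {N L : ℕ} {X : Fin N → ℤ} (hX : X ∈ XNL N L) (t : ℤ) :
    (fun i => X i + t) ∈ XNL N L :=
  ⟨fun _ _ hij => add_lt_add_left (hX.1 hij) t, fun i j => by linarith [hX.2 i j]⟩

lemma finite_XNL_first_eq_zero (n L : ℕ) : {X | X ∈ XNL (n + 1) L ∧ X 0 = 0}.Finite :=
  (Set.finite_Icc 0 fun _ => (L : ℤ)).subset fun X ⟨hX, h0⟩ =>
    ⟨fun i => by simpa [h0] using hX.1.monotone (Fin.zero_le i), fun i => by linarith [hX.2 i 0]⟩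

def xnlFirstGeEquiv (n L : ℕ) (a : ℤ) :
    {X // X ∈ XNL (n + 1) L ∧ a ≤ X 0} ≃ ℕ × {X // X ∈ XNL (n + 1) L ∧ X 0 = 0} where
  toFun X := ((X.1 0 - a).toNat, ⟨fun i => X.1 i - X.1 0, add_const_mem_XNL X.2.1 _, sub_self _⟩)
  invFun p := ⟨fun i => p.2.1 i + (a + p.1), add_const_mem_XNL p.2.2.1 _, by simp [p.2.2.2]⟩
  left_inv X := by ext i; simp only [Int.ofNat_toNat]; omega
  right_inv p := by ext <;> simp [p.2.2.2]

lemma summable_XNL_first_ge {R : Type*} [NormedField R] [CompleteSpace R] {n : ℕ}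
    {F : (Fin (n + 1) → ℤ) → R} {r : R} (hr : ‖r‖ < 1)
    (hF : ∀ X (m : ℕ), F (fun i => X i + m) = r ^ m * F X) (L : ℕ) (a : ℤ) :
    Summable fun X : {X // X ∈ XNL (n + 1) L ∧ a ≤ X 0} => F X := by
  have : Finite {X // X ∈ XNL (n + 1) L ∧ X 0 = 0} := (finite_XNL_first_eq_zero n L).to_subtype
  rw [← (xnlFirstGeEquiv n L a).symm.summable_iff]
  refine (summable_mul_of_summable_norm (f := fun m : ℕ => r ^ m)
    (g := fun X : {X // X ∈ XNL (n + 1) L ∧ X 0 = 0} => F (fun i => X.1 i + a))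
    (by simpa using summable_geometric_of_lt_one (norm_nonneg r) hr) Summable.of_finite).congr ?_
  rintro ⟨m, X⟩
  simp [xnlFirstGeEquiv, ← hF, add_assoc]

lemma hasSum_XNL_ge_of_eq_mul_cycShift {R : Type*} [Semiring R] [TopologicalSpace R]
    [IsTopologicalSemiring R] {n L : ℕ} {F : (Fin (n + 1) → ℤ) → R} {c S : R} {a : ℤ}
    (hF : ∀ X, F X = c * F (cycShift L X))
    (hS : HasSum (fun X : {X // X ∈ XNL (n + 1) L ∧ a ≤ X 0} => F X) S) (k : Fin (n + 1)) :
    HasSum (fun X : {X // X ∈ XNL (n + 1) L ∧ a ≤ X k} => F X) (c ^ (k : ℕ) * S) := by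
  induction k using Fin.induction with
  | zero => simpa using hS
  | succ k ih =>
    let e : {X // X ∈ XNL (n + 1) L ∧ a ≤ X k.succ} ≃
        {X // X ∈ XNL (n + 1) L ∧ a ≤ X k.castSucc} :=
      (cycShiftEquiv n L).subtypeEquiv fun X => by
        simp [cycShiftEquiv, cycShift_mem_XNL_iff]
    rw [← e.hasSum_iff] at ih
    simpa [e, cycShiftEquiv, pow_succ', mul_assoc, ← hF] using ih.mul_left c

section powDet

variable {K : Type*} [Field K]

noncomputable def powDet {N : ℕ} (u v : Fin N → K) (X : Fin N → ℤ) : K :=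
  Matrix.det (Matrix.of fun i j : Fin N =>
    u i ^ (((j : ℕ) : ℤ) + 1) * v i ^ (X j - (((j : ℕ) : ℤ) + 1)))

lemma LXdet_eq_powDet {N : ℕ} (X : Fin N → ℤ) (w : Fin N → ℂ) :
    LXdet X w = powDet w (fun i => w i + 1) X := rfl

lemma RXdet_eq_powDet {N : ℕ} (X : Fin N → ℤ) (w : Fin N → ℂ) :
    RXdet X w = powDet (fun i => (w i)⁻¹) (fun i => (w i + 1)⁻¹) X := by
  rw [RXdet, powDet]
  congr 1
  ext i j
  simp only [Matrix.of_apply, inv_zpow']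
  ring_nf

lemma powDet_add_const {N : ℕ} (u : Fin N → K) {v : Fin N → K} (hv : ∀ i, v i ≠ 0)
    (X : Fin N → ℤ) (m : ℤ) :
    powDet u v (fun j => X j + m) = (∏ i, v i ^ m) * powDet u v X := by
  rw [powDet, powDet, ← Matrix.det_mul_column]
  congr 1
  ext i j
  simp only [Matrix.of_apply, add_sub_right_comm _ m, zpow_add₀ (hv i)]
  ring

lemma powDet_cycShift {n : ℕ} {u v : Fin (n + 1) → K} (hu : ∀ i, u i ≠ 0) (hv : ∀ i, v i ≠ 0)
    {L : ℕ} (hL : n + 1 ≤ L) {ζ : K} (hζ : ∀ i, u i ^ (n + 1) * v i ^ (L - (n + 1)) = ζ)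
    (X : Fin (n + 1) → ℤ) :
    powDet u v (cycShift L X) = (-1) ^ n * ζ * (∏ i, v i / u i) * powDet u v X := by
  set M : Matrix (Fin (n + 1)) (Fin (n + 1)) K := Matrix.of fun i j =>
    u i ^ (((j : ℕ) : ℤ) + 1) * v i ^ (X j - (((j : ℕ) : ℤ) + 1))
  have hentries : (Matrix.of fun i j : Fin (n + 1) =>
      u i ^ (((j : ℕ) : ℤ) + 1) * v i ^ (cycShift L X j - (((j : ℕ) : ℤ) + 1))) =
      Matrix.of fun i j => v i / u i *
        (Matrix.of fun i j => (if j = Fin.last n then ζ else 1) *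
          M.submatrix id (finRotate (n + 1)) i j) i j := by
    ext i j
    have hui := hu i
    have hvi := hv i
    induction j using Fin.lastCases with
    | last =>
      simp only [Matrix.of_apply, Matrix.submatrix_apply, id, finRotate_last, if_true,
        cycShift_last, Fin.val_last, Fin.val_zero, M, ← hζ i, Nat.cast_zero, zero_add, zpow_one]
      rw [show X 0 + (L : ℤ) - ((n : ℤ) + 1) = X 0 - 1 + ((L - (n + 1) : ℕ) : ℤ) + 1 by
          push_cast [Nat.cast_sub hL]; ring,
        zpow_add_one₀ hvi, zpow_add₀ hvi, ← Nat.cast_succ, zpow_natCast, zpow_natCast]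
      field_simp
    | cast i =>
      simp only [Matrix.of_apply, Matrix.submatrix_apply, id, finRotate_apply,
        Fin.coeSucc_eq_succ, cycShift_castSucc, Fin.val_succ, Fin.val_castSucc, M,
        (Fin.castSucc_lt_last i).ne, if_false]
      push_cast
      rw [zpow_add_one₀ hui ((i : ℤ) + 1),
        show X i.succ - ((i : ℤ) + 1 + 1) = X i.succ - ((i : ℤ) + 1) - 1 by ring,
        zpow_sub_one₀ hvi]
      field_simp
  simp only [powDet]
  rw [hentries, Matrix.det_mul_column, Matrix.det_mul_row, Matrix.det_permute',
    Fintype.prod_ite_eq', sign_finRotate]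
  push_cast
  ring

end powDet

lemma ne_zero_and_add_one_ne_zero {R : Type*} [Semiring R] [NoZeroDivisors R] {n L : ℕ}
    (hL : n + 1 < L) {w z : R} (hz : z ≠ 0) (hw : w ^ (n + 1) * (w + 1) ^ (L - (n + 1)) = z ^ L) :
    w ≠ 0 ∧ w + 1 ≠ 0 :=
  have h := hw ▸ pow_ne_zero L hz
  ⟨ne_zero_pow n.succ_ne_zero (left_ne_zero_of_mul h),
    ne_zero_pow (by omega) (right_ne_zero_of_mul h)⟩

lemma RXdet_mul_LXdet_add_const {N : ℕ} {w w' : Fin N → ℂ} (hw : ∀ i, w i + 1 ≠ 0)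
    (hw' : ∀ i, w' i + 1 ≠ 0) (X : Fin N → ℤ) (m : ℕ) :
    RXdet (fun i => X i + m) w * LXdet (fun i => X i + m) w' =
      (∏ i, (w' i + 1) / (w i + 1)) ^ m * (RXdet X w * LXdet X w') := by
  rw [RXdet_eq_powDet, RXdet_eq_powDet, LXdet_eq_powDet, LXdet_eq_powDet,
    powDet_add_const _ (fun i => inv_ne_zero (hw i)), powDet_add_const _ hw', ← Finset.prod_pow,
    ← mul_mul_mul_comm, ← Finset.prod_mul_distrib]
  simp only [zpow_natCast, inv_pow, ← div_eq_inv_mul, div_pow]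

lemma RXdet_cycShift {n L : ℕ} (hL : n + 1 < L) {z : ℂ} (hz : z ≠ 0) {w : Fin (n + 1) → ℂ}
    (hw : ∀ j, w j ^ (n + 1) * (w j + 1) ^ (L - (n + 1)) = z ^ L) (X : Fin (n + 1) → ℤ) :
    RXdet (cycShift L X) w = (-1) ^ n * (z ^ L)⁻¹ * (∏ j, w j / (w j + 1)) * RXdet X w := by
  have h0 j := ne_zero_and_add_one_ne_zero hL hz (hw j)
  rw [RXdet_eq_powDet, RXdet_eq_powDet, powDet_cycShift (fun j => inv_ne_zero (h0 j).1)
    (fun j => inv_ne_zero (h0 j).2) hL.le (fun j => by rw [inv_pow, inv_pow, ← mul_inv, hw j])]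
  simp only [inv_div_inv]

lemma LXdet_cycShift {n L : ℕ} (hL : n + 1 < L) {z : ℂ} (hz : z ≠ 0) {w : Fin (n + 1) → ℂ}
    (hw : ∀ j, w j ^ (n + 1) * (w j + 1) ^ (L - (n + 1)) = z ^ L) (X : Fin (n + 1) → ℤ) :
    LXdet (cycShift L X) w = (-1) ^ n * z ^ L * (∏ j, (w j + 1) / w j) * LXdet X w := by
  have h0 j := ne_zero_and_add_one_ne_zero hL hz (hw j)
  exact powDet_cycShift (fun j => (h0 j).1) (fun j => (h0 j).2) hL.le hw X

lemma RXdet_mul_LXdet_eq_mul_cycShift {n L : ℕ} (hL : n + 1 < L) {z z' : ℂ} (hz : z ≠ 0)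
    (hz' : z' ≠ 0) {w w' : Fin (n + 1) → ℂ}
    (hw : ∀ j, w j ^ (n + 1) * (w j + 1) ^ (L - (n + 1)) = z ^ L)
    (hw' : ∀ j, w' j ^ (n + 1) * (w' j + 1) ^ (L - (n + 1)) = z' ^ L) (X : Fin (n + 1) → ℤ) :
    RXdet X w * LXdet X w' =
      (z / z') ^ L * (∏ j, (w j + 1) * w' j / (w j * (w' j + 1))) *
        (RXdet (cycShift L X) w * LXdet (cycShift L X) w') := by
  rw [RXdet_cycShift hL hz hw, LXdet_cycShift hL hz' hw']
  set P := ∏ j, (w j + 1) * w' j / (w j * (w' j + 1))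
  set Q := ∏ j, w j / (w j + 1)
  set Q' := ∏ j, (w' j + 1) / w' j
  have hsign : (-1 : ℂ) ^ n * (-1) ^ n = 1 := by rw [← mul_pow]; norm_num
  have hpow : (z / z') ^ L * ((z ^ L)⁻¹ * z' ^ L) = 1 := by
    rw [div_pow]
    field_simp
  have hprod : P * (Q * Q') = 1 := by
    simp only [P, Q, Q', ← Finset.prod_mul_distrib]
    refine Finset.prod_eq_one fun j _ => ?_
    obtain ⟨h0, h1⟩ := ne_zero_and_add_one_ne_zero hL hz (hw j)
    obtain ⟨h0', h1'⟩ := ne_zero_and_add_one_ne_zero hL hz' (hw' j)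
    field_simp
  calc RXdet X w * LXdet X w' =
      ((-1) ^ n * (-1) ^ n) * ((z / z') ^ L * ((z ^ L)⁻¹ * z' ^ L)) * (P * (Q * Q')) *
        (RXdet X w * LXdet X w') := by rw [hsign, hpow, hprod]; ring
    _ = _ := by ring

theorem sum_xk_ge_eq_const_mul_sum_x1_ge_general
    (N L : ℕ) (hN : 1 ≤ N) (hNL : N < L)
    (z z' : ℂ) (hz : z ≠ 0) (hz' : z' ≠ 0)
    (w w' : Fin N → ℂ)
    (hw : ∀ j, w j ^ N * (w j + 1) ^ (L - N) = z ^ L)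
    (hw' : ∀ j, w' j ^ N * (w' j + 1) ^ (L - N) = z' ^ L)
    (habs : ∏ j, ‖w' j + 1‖ < ∏ j, ‖w j + 1‖)
    (k : Fin N) (a : ℤ) :
    Summable (fun X : {X : Fin N → ℤ // X ∈ XNL N L ∧ a ≤ X k} =>
        RXdet X.1 w * LXdet X.1 w') ∧
    Summable (fun X : {X : Fin N → ℤ // X ∈ XNL N L ∧ a ≤ X (⟨0, hN⟩ : Fin N)} =>
        RXdet X.1 w * LXdet X.1 w') ∧
    (∑' X : {X : Fin N → ℤ // X ∈ XNL N L ∧ a ≤ X k}, RXdet X.1 w * LXdet X.1 w') =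
      (z / z') ^ ((k : ℕ) * L) *
        (∏ j, ((w j + 1) * w' j / (w j * (w' j + 1))) ^ (k : ℕ)) *
        ∑' X : {X : Fin N → ℤ // X ∈ XNL N L ∧ a ≤ X (⟨0, hN⟩ : Fin N)},
          RXdet X.1 w * LXdet X.1 w' := by
  obtain ⟨n, rfl⟩ : ∃ n, N = n + 1 := ⟨N - 1, by omega⟩
  have hw1 j := (ne_zero_and_add_one_ne_zero hNL hz (hw j)).2
  have hw1' j := (ne_zero_and_add_one_ne_zero hNL hz' (hw' j)).2
  have hr : ‖∏ j, (w' j + 1) / (w j + 1)‖ < 1 := by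
    rwa [norm_prod, Finset.prod_congr rfl fun j _ => norm_div _ _, Finset.prod_div_distrib,
      div_lt_one (Finset.prod_pos fun j _ => norm_pos_iff.2 (hw1 j))]
  have hS := (summable_XNL_first_ge (F := fun X => RXdet X w * LXdet X w') hr
    (RXdet_mul_LXdet_add_const hw1 hw1') L a).hasSum
  have hSk := hasSum_XNL_ge_of_eq_mul_cycShift
    (RXdet_mul_LXdet_eq_mul_cycShift hNL hz hz' hw hw') hS k
  refine ⟨hSk.summable, hS.summable, ?_⟩
  rw [hSk.tsum_eq, mul_pow, ← pow_mul, mul_comm L, Finset.prod_pow]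
  rfl

/-- Reduction of the sum over `{x_k ≥ a}` to the sum over `{x_1 ≥ a}`.
Here `k : Fin N` denotes the (0-based) index, so that the 1-based index is `k+1`. -/
theorem sum_xk_ge_eq_const_mul_sum_x1_ge
    (N L : ℕ) (hN : 1 ≤ N) (hNL : N < L)
    (z z' : ℂ) (hz : z ≠ 0) (hz' : z' ≠ 0) (hzz : z ^ L ≠ z' ^ L)
    (w w' : Fin N → ℂ)
    (hw : ∀ j, w j ^ N * (w j + 1) ^ (L - N) = z ^ L)
    (hw' : ∀ j, w' j ^ N * (w' j + 1) ^ (L - N) = z' ^ L)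
    (habs : ∏ j, ‖w' j + 1‖ < ∏ j, ‖w j + 1‖)
    (k : Fin N) (a : ℤ) :
    Summable (fun X : {X : Fin N → ℤ // X ∈ XNL N L ∧ a ≤ X k} =>
        RXdet X.1 w * LXdet X.1 w') ∧
    Summable (fun X : {X : Fin N → ℤ // X ∈ XNL N L ∧ a ≤ X (⟨0, hN⟩ : Fin N)} =>
        RXdet X.1 w * LXdet X.1 w') ∧
    (∑' X : {X : Fin N → ℤ // X ∈ XNL N L ∧ a ≤ X k}, RXdet X.1 w * LXdet X.1 w') =
      (z / z') ^ ((k : ℕ) * L) *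
        (∏ j, ((w j + 1) * w' j / (w j * (w' j + 1))) ^ (k : ℕ)) *
        ∑' X : {X : Fin N → ℤ // X ∈ XNL N L ∧ a ≤ X (⟨0, hN⟩ : Fin N)},
          RXdet X.1 w * LXdet X.1 w' :=
  sum_xk_ge_eq_const_mul_sum_x1_ge_general N L hN hNL z z' hz hz' w w' hw hw' habs k a
end

section
/- Let 1 ≤ N < L be integers, let a be an integer, and let f_1,…,f_N be nonzero complex numbers. For 1 ≤ m ≤ n ≤ N write F_{m,n} = ∏_{j=m}^{n} f_j, and assume F_{m,n} ≠ 1 for all 2 ≤ m ≤ n ≤ N. Then ∑_{X ∈ 𝒳_N(L), x_1 = a} ∏_{j=1}^N f_j^{x_j−j} = ∑_{k=0}^{N−1} ∑_{1 < s_1 < ⋯ < s_k ≤ N} [ F_{1,s_1−1}^{a−1} / ∏_{j=2}^{s_1−1} (1 − F_{j,s_1−1}) ] · ∏_{i=1}^{k} [ F_{s_i,s_{i+1}−1}^{a+L−N−1} / ( (1 − F_{s_i,s_{i+1}−1}^{−1}) ∏_{j=s_i+1}^{s_{i+1}−1} (1 − F_{j,s_{i+1}−1}) ) ], where s_{k+1}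 := N+1, the inner sum is over all subsets {s_1 < ⋯ < s_k} of {2,…,N} of size k, all powers are integer powers, and the k = 0 term is F_{1,N}^{a−1} / ∏_{j=2}^{N} (1 − F_{j,N}). -/
open scoped BigOperators

/-!
With `y_j = x_j - j` the left-hand side becomes `f_1^{a-1}` times the sum of `∏_{j ≥ 2} f_j^{y_j}`
over `a - 1 ≤ y_2 ≤ ⋯ ≤ y_N ≤ c`, where `c = a + L - N - 1`. Let `V_n(t)` be the analogous sum
over `y_n = t ≤ y_{n+1} ≤ ⋯ ≤ y_N ≤ c`, so that `V_n(t) = f_n^t ∑_{s=t}^{c} V_{n+1}(s)`.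
By downward induction on `n`, `V_n(t)` is a sum over `S ⊆ {n+1, …, N}` of a lead factor
`F_{n,q}^t / ∏_{j=n+1}^{q} (1 - F_{j,q})` (`q + 1` being the least element of `S`, or `N + 1`)
times block factors that depend on neither `n` nor `t`. In the inductive step the geometric
sum `∑_{s=t}^{c} F^s = F^t / (1 - F) + F^c / (1 - F⁻¹)` splits each term of `V_{n+1}` in two:
the first part absorbs `f_n^t` into the lead factor, the second opens a new block at `n + 1`.
-/

open Finset

namespace Finset

variable {α : Type*} [LinearOrder α]

def nextAbove (S : Finset α) (d p : α) : α :=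
  (S.filter (p < ·)).min.untopD d

lemma nextAbove_eq_or_mem (S : Finset α) (d p : α) :
    S.nextAbove d p = d ∨ S.nextAbove d p ∈ S := by
  unfold nextAbove
  rcases h : (S.filter (p < ·)).min with _ | x
  · exact .inl (WithTop.untopD_top d)
  · exact .inr (mem_filter.1 (mem_of_min h)).1

lemma nextAbove_of_forall_lt {S : Finset α} {p : α} (d : α) (h : ∀ x ∈ S, p < x) :
    S.nextAbove d p = S.min.untopD d := by
  rw [nextAbove, filter_true_of_mem h]

lemma nextAbove_of_forall_le {S : Finset α} {p : α} (d : α) (h : ∀ y ∈ S, y ≤ p) :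
    S.nextAbove d p = d := by
  rw [nextAbove, filter_false_of_mem fun y hy => not_lt.2 (h y hy), min_empty,
    WithTop.untopD_top]

lemma nextAbove_eq_of_isLeast {S : Finset α} {p x : α} (d : α)
    (hx : IsLeast {y | y ∈ S ∧ p < y} x) : S.nextAbove d p = x := by
  rw [nextAbove, le_antisymm (min_le (mem_filter.2 hx.1))
    (Finset.le_min fun y hy => WithTop.coe_le_coe.2 (hx.2 (mem_filter.1 hy))),
    WithTop.untopD_coe]

lemma nextAbove_insert_of_le {S : Finset α} {m p : α} (d : α) (h : m ≤ p) :
    (insert m S).nextAbove d p = S.nextAbove d p := by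
  rw [nextAbove, nextAbove, filter_insert, if_neg (not_lt.2 h)]

lemma nextAbove_insert_of_lt {S : Finset α} {m p : α} (d : α) (hpm : p < m)
    (hS : ∀ x ∈ S, m < x) : (insert m S).nextAbove d p = m := by
  rw [nextAbove_of_forall_lt d (by simpa [hpm] using fun x hx => hpm.trans (hS x hx)),
    min_insert, min_eq_left (Finset.le_min fun x hx => WithTop.coe_le_coe.2 (hS x hx).le),
    WithTop.untopD_coe]

def paddedEnum (S : Finset α) (d : α) (i : Fin (S.card + 1)) : α :=
  if h : (i : ℕ) < S.card then S.orderEmbOfFin rfl ⟨i, h⟩ else d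

lemma paddedEnum_castSucc (S : Finset α) (d : α) (i : Fin S.card) :
    S.paddedEnum d i.castSucc = S.orderEmbOfFin rfl i :=
  dif_pos i.isLt

lemma paddedEnum_zero (S : Finset α) (d : α) : S.paddedEnum d 0 = S.min.untopD d := by
  rcases S.eq_empty_or_nonempty with rfl | hS
  · simp [paddedEnum]
  · rw [paddedEnum, Fin.val_zero, dif_pos (card_pos.2 hS), ← coe_min' hS, WithTop.untopD_coe]
    exact orderEmbOfFin_zero rfl (card_pos.2 hS)

lemma paddedEnum_succ (S : Finset α) (d : α) (i : Fin S.card) :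
    S.paddedEnum d i.succ = S.nextAbove d (S.orderEmbOfFin rfl i) := by
  have hmem : ∀ y ∈ S, ∃ j, S.orderEmbOfFin rfl j = y := fun y hy => by
    rwa [← mem_coe, ← range_orderEmbOfFin S rfl] at hy
  have hlt : ∀ j, S.orderEmbOfFin rfl i < S.orderEmbOfFin rfl j ↔ i < j :=
    fun j => (S.orderEmbOfFin rfl).lt_iff_lt
  rw [paddedEnum]
  split_ifs with h
  · refine (nextAbove_eq_of_isLeast d ⟨⟨orderEmbOfFin_mem S rfl _, (hlt _).2 ?_⟩, ?_⟩).symm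
    · exact Fin.lt_def.2 (by simp)
    · rintro y ⟨hy, hiy⟩
      obtain ⟨j, rfl⟩ := hmem y hy
      have := Fin.lt_def.1 ((hlt j).1 hiy)
      exact (S.orderEmbOfFin rfl).le_iff_le.2 (Fin.le_def.2 this)
  · refine (nextAbove_of_forall_le d fun y hy => ?_).symm
    obtain ⟨j, rfl⟩ := hmem y hy
    simp only [Fin.val_succ] at h
    exact (S.orderEmbOfFin rfl).le_iff_le.2 (Fin.le_def.2 (by omega))

lemma prod_paddedEnum {M : Type*} [CommMonoid M] (S : Finset α) (d : α) (g : α → α → M) :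
    ∏ i : Fin S.card, g (S.paddedEnum d i.castSucc) (S.paddedEnum d i.succ) =
      ∏ p ∈ S, g p (S.nextAbove d p) := by
  simp_rw [paddedEnum_castSucc, paddedEnum_succ]
  rw [← prod_coe_sort S]
  exact (S.orderIsoOfFin rfl).toEquiv.prod_comp fun p : S => g p (S.nextAbove d p)

end Finset

section Geometric

variable {K : Type*} [Field K]

lemma one_sub_mul_sum_Icc_zpow {w : K} (hw : w ≠ 0) {t c : ℤ} (h : t ≤ c + 1) :
    (1 - w) * ∑ s ∈ Icc t c, w ^ s = w ^ t - w ^ (c + 1) := by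
  induction c, (by omega : t - 1 ≤ c) using Int.leInduction with
  | base => simp
  | succ c hc ih =>
    rw [← insert_Icc_right_eq_Icc_add_one (by omega), sum_insert (by simp), mul_add,
      ih (by omega), zpow_add_one₀ hw (c + 1)]
    ring

lemma sum_Icc_zpow {w : K} (hw0 : w ≠ 0) (hw1 : w ≠ 1) {t c : ℤ} (h : t ≤ c + 1) :
    ∑ s ∈ Icc t c, w ^ s = w ^ t / (1 - w) + w ^ c / (1 - w⁻¹) := by
  have h1 : 1 - w ≠ 0 := sub_ne_zero.2 hw1.symm
  have hc : w ^ c / (1 - w⁻¹) = -w ^ (c + 1) / (1 - w) := by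
    have h2 : w - 1 ≠ 0 := sub_ne_zero.2 hw1
    rw [zpow_add_one₀ hw0]
    field_simp
    ring
  rw [hc, neg_div, ← sub_eq_add_neg, ← sub_div, ← one_sub_mul_sum_Icc_zpow hw0 h,
    mul_div_cancel_left₀ _ h1]

end Geometric

lemma Fin.strictMono_iff_monotone_sub_succ {n : ℕ} {X : Fin (n + 1) → ℤ} :
    StrictMono X ↔ Monotone fun i : Fin (n + 1) => X i - ((i : ℕ) + 1) := by
  rw [Fin.strictMono_iff_lt_succ, Fin.monotone_iff_le_succ]
  refine forall_congr' fun i => ?_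
  simp only [Fin.val_castSucc, Fin.val_succ, Nat.cast_add, Nat.cast_one]
  omega

namespace XNL

noncomputable def chainTuples (k : ℕ) (t c : ℤ) : Finset (Fin (k + 1) → ℤ) :=
  open Classical in
  (Fintype.piFinset fun _ => Icc t c).filter fun y => Monotone y ∧ y 0 = t

lemma mem_chainTuples {k : ℕ} {t c : ℤ} {y : Fin (k + 1) → ℤ} :
    y ∈ chainTuples k t c ↔ Monotone y ∧ y 0 = t ∧ y (Fin.last k) ≤ c := by
  simp only [chainTuples, mem_filter, Fintype.mem_piFinset, mem_Icc]
  constructor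
  · rintro ⟨hy, hmono, h0⟩
    exact ⟨hmono, h0, (hy _).2⟩
  · rintro ⟨hmono, h0, hlast⟩
    exact ⟨fun i => ⟨h0 ▸ hmono (Fin.zero_le i), (hmono (Fin.le_last i)).trans hlast⟩,
      hmono, h0⟩

section Expansion

variable {K : Type*} [Field K] (f : ℕ → K) (c : ℤ)

noncomputable def chainSum (k n : ℕ) (t : ℤ) : K :=
  ∑ y ∈ chainTuples k t c, ∏ i : Fin (k + 1), f (n + i) ^ y i

lemma chainSum_zero {t : ℤ} (h : t ≤ c) (n : ℕ) : chainSum f c 0 n t = f n ^ t := by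
  have hsingle : chainTuples 0 t c = {fun _ => t} := by
    ext y
    have h0 : ∀ i : Fin (0 + 1), i = 0 := fun i => Fin.ext (by omega)
    simp only [mem_chainTuples, mem_singleton, funext_iff, Fin.last_zero]
    exact ⟨fun hy i => h0 i ▸ hy.2.1,
      fun hy => ⟨fun i j _ => by rw [h0 i, h0 j], hy 0, hy 0 ▸ h⟩⟩
  simp [chainSum, hsingle]

lemma chainSum_succ (k n : ℕ) (t : ℤ) :
    chainSum f c (k + 1) n t = f n ^ t * ∑ s ∈ Icc t c, chainSum f c k (n + 1) s := by
  simp only [chainSum, mul_sum]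
  rw [sum_sigma']
  symm
  refine sum_nbij' (fun p => Fin.cons t p.2) (fun y => ⟨Fin.tail y 0, Fin.tail y⟩)
    ?_ ?_ ?_ ?_ ?_
  · rintro ⟨s, z⟩ hz
    simp only [mem_sigma, mem_Icc, mem_chainTuples] at hz ⊢
    obtain ⟨⟨hts, -⟩, hmono, rfl, hlast⟩ := hz
    exact ⟨monotone_vecCons.2 ⟨hts, hmono⟩, rfl, hlast⟩
  · intro y hy
    simp only [mem_sigma, mem_Icc, mem_chainTuples] at hy ⊢
    obtain ⟨hmono, h0, hlast⟩ := hy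
    have htail : Monotone (Fin.tail y) := hmono.comp Fin.strictMono_succ.monotone
    have hty : Fin.tail y (Fin.last k) = y (Fin.last (k + 1)) := by simp [Fin.tail]
    exact ⟨⟨h0 ▸ hmono (Fin.zero_le _), (htail (Fin.zero_le _)).trans (hty ▸ hlast)⟩,
      htail, trivial, hty ▸ hlast⟩
  · rintro ⟨s, z⟩ hz
    simp only [mem_sigma, mem_chainTuples] at hz
    simp [hz.2.2.1]
  · intro y hy
    simp only [mem_chainTuples] at hy
    simpa [hy.2.1] using Fin.cons_self_tail y
  · rintro ⟨s, z⟩ -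
    simp [Fin.prod_univ_succ, add_assoc, add_comm 1]

def intervalProd (m n : ℕ) : K := ∏ j ∈ Icc m n, f j

def leadFactor (n : ℕ) (t : ℤ) (q : ℕ) : K :=
  intervalProd f n q ^ t / ∏ j ∈ Icc (n + 1) q, (1 - intervalProd f j q)

def blockFactor (p q : ℕ) : K :=
  intervalProd f p q ^ c /
    ((1 - (intervalProd f p q)⁻¹) * ∏ j ∈ Icc (p + 1) q, (1 - intervalProd f j q))

/-- `S.nextAbove (E + 1) p - 1` is the last index of the block that starts at `p`, i.e. the
`s_{i+1} - 1` of the statement (with `s_{k+1} = E + 1`). -/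
def expansionTerm (E n : ℕ) (t : ℤ) (S : Finset ℕ) : K :=
  leadFactor f n t (S.nextAbove (E + 1) n - 1) *
    ∏ p ∈ S, blockFactor f c p (S.nextAbove (E + 1) p - 1)

lemma intervalProd_eq_mul {n q : ℕ} (h : n ≤ q) :
    intervalProd f n q = f n * intervalProd f (n + 1) q := by
  rw [intervalProd, intervalProd, ← insert_Icc_add_one_left_eq_Icc h, prod_insert (by simp)]

lemma leadFactor_self (n : ℕ) (t : ℤ) : leadFactor f n t n = f n ^ t := by
  simp [leadFactor, intervalProd]

lemma leadFactor_eq_mul {n q : ℕ} (h : n < q) (t : ℤ) :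
    leadFactor f n t q =
      f n ^ t * (leadFactor f (n + 1) t q / (1 - intervalProd f (n + 1) q)) := by
  rw [leadFactor, leadFactor, intervalProd_eq_mul f h.le, mul_zpow,
    ← insert_Icc_add_one_left_eq_Icc (Nat.succ_le_of_lt h), prod_insert (by simp)]
  simp only [div_eq_mul_inv, mul_inv]
  ring

lemma sum_leadFactor {m q : ℕ} (hF0 : intervalProd f m q ≠ 0) (hF1 : intervalProd f m q ≠ 1)
    {t : ℤ} (ht : t ≤ c + 1) :
    ∑ s ∈ Icc t c, leadFactor f m s q =
      leadFactor f m t q / (1 - intervalProd f m q) + blockFactor f c m q := by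
  simp only [leadFactor, blockFactor]
  rw [← sum_div, sum_Icc_zpow hF0 hF1 ht]
  simp only [div_eq_mul_inv, mul_inv]
  ring

lemma expansionTerm_empty (n : ℕ) (t : ℤ) : expansionTerm f c n n t ∅ = f n ^ t := by
  simp [expansionTerm, nextAbove, leadFactor_self]

lemma expansionTerm_eq_paddedEnum {E n : ℕ} {S : Finset ℕ} (hS : ∀ x ∈ S, n < x) (t : ℤ) :
    expansionTerm f c E n t S =
      leadFactor f n t (S.paddedEnum (E + 1) 0 - 1) *
        ∏ i : Fin S.card,
          blockFactor f c (S.paddedEnum (E + 1) i.castSucc)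
            (S.paddedEnum (E + 1) i.succ - 1) := by
  rw [prod_paddedEnum S (E + 1) fun p q => blockFactor f c p (q - 1), paddedEnum_zero,
    expansionTerm, nextAbove_of_forall_lt _ hS]

lemma mul_sum_expansionTerm_succ {E n : ℕ} (hnE : n + 1 ≤ E) {S : Finset ℕ}
    (hS : S ⊆ Icc (n + 2) E)
    (hF0 : ∀ q, n + 1 ≤ q → q ≤ E → intervalProd f (n + 1) q ≠ 0)
    (hF1 : ∀ q, n + 1 ≤ q → q ≤ E → intervalProd f (n + 1) q ≠ 1)
    {t : ℤ} (ht : t ≤ c + 1) :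
    f n ^ t * ∑ s ∈ Icc t c, expansionTerm f c E (n + 1) s S =
      expansionTerm f c E n t S + expansionTerm f c E n t (insert (n + 1) S) := by
  have hlt : ∀ x ∈ S, n + 1 < x := fun x hx => by have := mem_Icc.1 (hS hx); omega
  set q := S.nextAbove (E + 1) (n + 1) - 1 with hq_def
  have hq : n + 1 ≤ q ∧ q ≤ E := by
    rcases S.nextAbove_eq_or_mem (E + 1) (n + 1) with h | h
    · omega
    · have := mem_Icc.1 (hS h); omega
  have hlead : S.nextAbove (E + 1) n = S.nextAbove (E + 1) (n + 1) := by
    rw [nextAbove_of_forall_lt _ fun x hx => (hlt x hx).trans' (Nat.lt_add_one n),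
      nextAbove_of_forall_lt _ hlt]
  have hblocks :
      ∏ p ∈ insert (n + 1) S, blockFactor f c p ((insert (n + 1) S).nextAbove (E + 1) p - 1) =
        blockFactor f c (n + 1) q * ∏ p ∈ S, blockFactor f c p (S.nextAbove (E + 1) p - 1) := by
    rw [prod_insert fun h => (hlt _ h).false, nextAbove_insert_of_le _ le_rfl]
    congr 1
    exact prod_congr rfl fun p hp => by rw [nextAbove_insert_of_le _ (hlt p hp).le]
  simp only [expansionTerm]
  rw [hblocks, hlead, nextAbove_insert_of_lt _ (Nat.lt_add_one n) hlt, Nat.add_sub_cancel,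
    leadFactor_self, ← hq_def, ← sum_mul,
    sum_leadFactor f c (hF0 q hq.1 hq.2) (hF1 q hq.1 hq.2) ht,
    leadFactor_eq_mul f (by omega : n < q)]
  ring

theorem chainSum_eq_sum_expansionTerm (k n : ℕ) {t : ℤ} (ht : t ≤ c)
    (hf : ∀ j, n < j → j ≤ n + k → f j ≠ 0)
    (hF : ∀ m q, n < m → m ≤ q → q ≤ n + k → intervalProd f m q ≠ 1) :
    chainSum f c k n t =
      ∑ S ∈ (Icc (n + 1) (n + k)).powerset, expansionTerm f c (n + k) n t S := by
  induction k generalizing n t with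
  | zero => simp [chainSum_zero f c ht, expansionTerm_empty]
  | succ k ih =>
    have hinner : ∀ s ∈ Icc t c, chainSum f c k (n + 1) s =
        ∑ S ∈ (Icc (n + 2) (n + (k + 1))).powerset,
          expansionTerm f c (n + (k + 1)) (n + 1) s S := fun s hs => by
      rw [ih (n + 1) (mem_Icc.1 hs).2 (fun j hj hjk => hf j (by omega) (by omega))
        (fun m q hm hmq hq => hF m q (by omega) hmq (by omega)),
        show n + 1 + k = n + (k + 1) by omega]
    rw [chainSum_succ, sum_congr rfl hinner, sum_comm, mul_sum,
      ← insert_Icc_add_one_left_eq_Icc (by omega : n + 1 ≤ n + (k + 1)),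
      sum_powerset_insert (by simp), ← sum_add_distrib]
    refine sum_congr rfl fun S hS =>
      mul_sum_expansionTerm_succ f c (by omega) (mem_powerset.1 hS) ?_ ?_ (by omega)
    · exact fun q hq hqE => prod_ne_zero_iff.2 fun j hj => by
        have := mem_Icc.1 hj
        exact hf j (by omega) (by omega)
    · exact fun q hq hqE => hF (n + 1) q (by omega) hq hqE

end Expansion

lemma mem_succ_iff {k L : ℕ} {X : Fin (k + 1) → ℤ} :
    X ∈ XNL (k + 1) L ↔ StrictMono X ∧ X (Fin.last k) < X 0 + L := by
  refine ⟨fun h => ⟨h.1, h.2 _ _⟩, fun ⟨hX, hlast⟩ => ⟨hX, fun i j => ?_⟩⟩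
  have := hX.monotone (Fin.le_last i)
  have := hX.monotone (Fin.zero_le j)
  omega

theorem tsum_eq_chainSum (N L : ℕ) (hN : 1 ≤ N) (a : ℤ) {K : Type*} [Field K]
    [TopologicalSpace K] (f : ℕ → K) :
    (∑' X : {X : Fin N → ℤ // X ∈ XNL N L ∧ X (⟨0, hN⟩ : Fin N) = a},
        ∏ j : Fin N, f ((j : ℕ) + 1) ^ (X.1 j - (((j : ℕ) : ℤ) + 1))) =
      chainSum f (a + L - N - 1) (N - 1) 1 (a - 1) := by
  obtain ⟨k, rfl⟩ : ∃ k, N = k + 1 := ⟨N - 1, by omega⟩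
  let shift : Fin (k + 1) → ℤ := fun i => (i : ℤ) + 1
  have hmem : ∀ X, (X ∈ XNL (k + 1) L ∧ X ⟨0, hN⟩ = a) ↔
      Equiv.subRight shift X ∈ chainTuples k (a - 1) (a + L - ↑(k + 1) - 1) := by
    intro X
    rw [mem_succ_iff, Fin.strictMono_iff_monotone_sub_succ, mem_chainTuples]
    simp only [shift, Equiv.subRight_apply, Pi.sub_def, Fin.zero_eta, Fin.val_zero,
      Fin.val_last, Nat.cast_zero, Nat.cast_add, Nat.cast_one, zero_add, sub_left_inj]
    constructor
    · rintro ⟨⟨hm, hl⟩, rfl⟩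
      exact ⟨hm, rfl, by omega⟩
    · rintro ⟨hm, h0, hl⟩
      exact ⟨⟨hm, by omega⟩, h0⟩
  rw [← (Equiv.subtypeEquiv _ hmem).symm.tsum_eq]
  refine (Finset.tsum_subtype _
    fun y => ∏ j : Fin (k + 1), f (j + 1) ^ ((y + shift) j - (j + 1))).trans ?_
  refine sum_congr rfl fun y _ => prod_congr rfl fun j _ => ?_
  simp [shift, add_comm]

end XNL

open XNL in
/-- Geometric-type summation formula: the sum of `∏_{j=1}^N f_j^{x_j-j}` over
`X ∈ 𝒳_N(L)` with `x_1 = a`, expressed as a sum over the subsets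
`{s_1 < ⋯ < s_k} ⊆ {2,…,N}` (with the convention `s_{k+1} = N+1`).
Here `f : ℕ → ℂ` with the relevant values `f 1, …, f N`, and
`F_{m,n} = ∏_{j=m}^n f_j`. -/
theorem sum_x1_eq_a_prod_pow
    (N L : ℕ) (hN : 1 ≤ N) (hNL : N < L) (a : ℤ)
    (f : ℕ → ℂ) (hf : ∀ j, 1 ≤ j → j ≤ N → f j ≠ 0)
    (hF : ∀ m n, 2 ≤ m → m ≤ n → n ≤ N → (∏ j ∈ Finset.Icc m n, f j) ≠ 1) :
    (∑' X : {X : Fin N → ℤ // X ∈ XNL N L ∧ X (⟨0, hN⟩ : Fin N) = a},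
        ∏ j : Fin N, f ((j : ℕ) + 1) ^ (X.1 j - (((j : ℕ) : ℤ) + 1))) =
      ∑ S ∈ (Finset.Icc 2 N).powerset,
        (let s : Fin (S.card + 1) → ℕ := fun i =>
          if h : (i : ℕ) < S.card then S.orderEmbOfFin rfl ⟨(i : ℕ), h⟩ else N + 1
        ((∏ j ∈ Finset.Icc 1 (s 0 - 1), f j) ^ (a - 1) /
            ∏ j ∈ Finset.Icc 2 (s 0 - 1), (1 - ∏ j' ∈ Finset.Icc j (s 0 - 1), f j')) *
          ∏ i : Fin S.card,
            (∏ j ∈ Finset.Icc (s i.castSucc) (s i.succ - 1), f j) ^ (a + (L : ℤ) - N - 1) /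
              ((1 - (∏ j ∈ Finset.Icc (s i.castSucc) (s i.succ - 1), f j)⁻¹) *
                ∏ j ∈ Finset.Icc (s i.castSucc + 1) (s i.succ - 1),
                  (1 - ∏ j' ∈ Finset.Icc j (s i.succ - 1), f j'))) := by
  rw [tsum_eq_chainSum N L hN a f,
    chainSum_eq_sum_expansionTerm f _ (N - 1) 1 (by omega) (fun j hj hjN => hf j hj.le (by omega))
      (fun m q hm hmq hq => hF m q hm hmq (by omega)),
    show 1 + (N - 1) = N by omega]
  refine sum_congr rfl fun S hS => ?_
  exact expansionTerm_eq_paddedEnum f _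
    (fun x hx => by have := mem_Icc.1 (mem_powerset.1 hS hx); omega) (a - 1)
end

section
/- Let n ≥ 1 and let w_1,…,w_n and w′_1,…,w′_n be complex numbers such that: w_i ∉ {0, −1} for all i; w_i ≠ w′_j for all i, j; and for all subsets S, T of {1,…,n} with |S| = |T| and 1 ≤ |S| ≤ n−1 one has ∏_{i∈T}(w_i+1) ≠ ∏_{i∈S}(w′_i+1). Then ∑_{σ,σ′ ∈ S_n} sgn(σ)sgn(σ′) [ ∏_{i=1}^n ( w′_{σ′(i)} / w_{σ(i)} )^{i−1} ] / [ ∏_{j=2}^n ( 1 − ∏_{i=j}^n (w′_{σ′(i)}+1)/(w_{σ(i)}+1) ) ] = ( ∏_{j=1}^n (w_j+1) − ∏_{j=1}^n (w′_j+1) ) · det[ 1/(w_i − w′_{i′}) ]_{i,i′=1}^n, where S_n is the symmetric group on {1,…,n}. -/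
/-!
Fixing `σ 0 = k` and `σ' 0 = l` and writing `σ (i + 1) = k.succAbove (τ i)`, the `i = 0` factor of
the numerator and the `j = 1` factor of the denominator no longer depend on `τ, τ'`, and what is
left is the same sum for `w, w'` with the entries `k, l` removed. By induction, with the separation
hypothesis keeping the split-off denominators nonzero, the left side becomes
`∑ₖ ∑ₗ (-1)^(k+l) rₖ sₗ Mₖₗ = s ⬝ adj(C) r`, where `C` is the Cauchy matrix, `Mₖₗ` its minors,
`rₖ = ∏_{i ≠ k} (wᵢ + 1) / wᵢ` and `sₗ = ∏_{j ≠ l} w'ⱼ`.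

If the `w'ⱼ` are distinct and different from `-1`, the partial fraction expansion of
`z ∏ⱼ (z - w'ⱼ) - (z - γ) ∏ᵢ (z - wᵢ)`, with `γ` chosen so that it vanishes at `z = -1`,
yields `x` with `C x = r` and `s ⬝ x = ∏ (wᵢ + 1) - ∏ (w'ⱼ + 1)`, so
`s ⬝ adj(C) r = det C * (s ⬝ x)` is the right side. The general case follows by continuity,
perturbing `w'` along a line `t ↦ w' + t d`.
-/

open Finset Matrix Filter Topology Equiv

namespace Fin

variable {n : ℕ}

def permCons (k : Fin (n + 1)) (τ : Perm (Fin n)) : Perm (Fin (n + 1)) :=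
  k.cycleRange.symm * Perm.decomposeFin.symm (0, τ)

@[simp]
theorem permCons_zero (k : Fin (n + 1)) (τ : Perm (Fin n)) : permCons k τ 0 = k := by
  simp [permCons]

@[simp]
theorem permCons_succ (k : Fin (n + 1)) (τ : Perm (Fin n)) (i : Fin n) :
    permCons k τ i.succ = k.succAbove (τ i) := by
  simp [permCons]

theorem sign_permCons (k : Fin (n + 1)) (τ : Perm (Fin n)) :
    Perm.sign (permCons k τ) = (-1) ^ (k : ℕ) * Perm.sign τ := by
  simp [permCons, Perm.decomposeFin.symm_sign]

theorem bijective_permCons :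
    Function.Bijective fun p : Fin (n + 1) × Perm (Fin n) => permCons p.1 p.2 := by
  refine (Fintype.bijective_iff_injective_and_card _).2 ⟨?_, ?_⟩
  · rintro ⟨k, τ⟩ ⟨l, τ'⟩ h
    have hkl : k = l := by simpa using congr($h 0)
    subst hkl
    refine Prod.ext rfl (Equiv.ext fun i => succAbove_right_injective (p := k) ?_)
    simpa using congr($h i.succ)
  · simp [Fintype.card_perm, Nat.factorial_succ]

theorem sum_perm_eq_sum_permCons {M : Type*} [AddCommMonoid M] (f : Perm (Fin (n + 1)) → M) :
    ∑ σ, f σ = ∑ k, ∑ τ, f (permCons k τ) := by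
  rw [← Fintype.sum_prod_type']
  exact (Fintype.sum_bijective _ bijective_permCons _ _ fun _ => rfl).symm

end Fin

theorem prod_pow_val_fin_succ {M : Type*} [CommMonoid M] {n : ℕ} (g : Fin (n + 1) → M) :
    ∏ i : Fin (n + 1), g i ^ (i : ℕ) =
      (∏ i : Fin n, g i.succ) * ∏ i : Fin n, g i.succ ^ (i : ℕ) := by
  simp [Fin.prod_univ_succ, pow_succ, prod_mul_distrib, mul_comm]

theorem prod_div_perm_apply {ι M : Type*} [Fintype ι] [DivisionCommMonoid M] (f g : ι → M)
    (τ τ' : Perm ι) : ∏ i, f (τ' i) / g (τ i) = (∏ i, f i) / ∏ i, g i := by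
  rw [prod_div_distrib, Equiv.prod_comp τ' f, Equiv.prod_comp τ g]

section Field

variable {K : Type*} [Field K]

open Polynomial

def permSumTerm {n : ℕ} (w w' : Fin n → K) (σ σ' : Perm (Fin n)) : K :=
  ((Perm.sign σ : ℤ) : K) * ((Perm.sign σ' : ℤ) : K) *
    (∏ i : Fin n, (w' (σ' i) / w (σ i)) ^ (i : ℕ)) /
    ∏ j ∈ univ.filter (fun j : Fin n => 0 < (j : ℕ)),
      (1 - ∏ i ∈ univ.filter (fun i : Fin n => j ≤ i), ((w' (σ' i) + 1) / (w (σ i) + 1)))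

def permSum (n : ℕ) (w w' : Fin n → K) : K :=
  ∑ σ : Perm (Fin n), ∑ σ' : Perm (Fin n), permSumTerm w w' σ σ'

theorem prod_filter_pos_one_sub_prod_filter_le {n : ℕ} (h : Fin (n + 2) → K) :
    ∏ j ∈ univ.filter (fun j : Fin (n + 2) => 0 < (j : ℕ)),
        (1 - ∏ i ∈ univ.filter (fun i : Fin (n + 2) => j ≤ i), h i) =
      (1 - ∏ i : Fin (n + 1), h i.succ) *
        ∏ j ∈ univ.filter (fun j : Fin (n + 1) => 0 < (j : ℕ)),
          (1 - ∏ i ∈ univ.filter (fun i : Fin (n + 1) => j ≤ i), h i.succ) := by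
  have hpos : ∀ m, univ.filter (fun j : Fin (m + 1) => 0 < (j : ℕ)) = Ioi 0 := fun m => by
    ext j; rw [mem_filter, mem_Ioi, Fin.lt_def, Fin.val_zero]; simp
  have hIci : Ici (0 : Fin (n + 1)) = univ := by ext; simp
  rw [hpos, hpos, Fin.prod_Ioi_zero, Fin.prod_univ_succ, Fin.prod_Ioi_zero]
  simp only [filter_le_eq_Ici, Fin.prod_Ici_succ, hIci]

theorem permSumTerm_permCons {n : ℕ} (w w' : Fin (n + 2) → K) (k l : Fin (n + 2))
    (τ τ' : Perm (Fin (n + 1))) :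
    permSumTerm w w' (Fin.permCons k τ) (Fin.permCons l τ') =
      (-1) ^ ((k : ℕ) + l) * ((∏ i, w' (l.succAbove i)) / ∏ i, w (k.succAbove i)) /
          (1 - (∏ i, (w' (l.succAbove i) + 1)) / ∏ i, (w (k.succAbove i) + 1)) *
        permSumTerm (w ∘ k.succAbove) (w' ∘ l.succAbove) τ τ' := by
  unfold permSumTerm
  rw [prod_pow_val_fin_succ, prod_filter_pos_one_sub_prod_filter_le]
  simp only [Fin.permCons_succ, Fin.sign_permCons, Function.comp_apply,
    prod_div_perm_apply (fun i => w' (l.succAbove i)) (fun i => w (k.succAbove i)),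
    prod_div_perm_apply (fun i => w' (l.succAbove i) + 1) (fun i => w (k.succAbove i) + 1)]
  push_cast
  simp only [div_eq_mul_inv, mul_inv]
  ring

theorem permSum_succ_succ {n : ℕ} (w w' : Fin (n + 2) → K) :
    permSum (n + 2) w w' =
      ∑ k : Fin (n + 2), ∑ l : Fin (n + 2), (-1) ^ ((k : ℕ) + l) *
          ((∏ i, w' (l.succAbove i)) / ∏ i, w (k.succAbove i)) /
          (1 - (∏ i, (w' (l.succAbove i) + 1)) / ∏ i, (w (k.succAbove i) + 1)) *
        permSum (n + 1) (w ∘ k.succAbove) (w' ∘ l.succAbove) := by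
  simp only [permSum, Fin.sum_perm_eq_sum_permCons (n := n + 1), permSumTerm_permCons, mul_sum]
  exact sum_congr rfl fun k _ => sum_comm

theorem permSum_one (w w' : Fin 1 → K) : permSum 1 w w' = 1 := by
  simp [permSum, permSumTerm]

def ProperSubprodsNe {n : ℕ} (w w' : Fin n → K) : Prop :=
  ∀ S T : Finset (Fin n), S.card = T.card → 1 ≤ S.card → S.card ≤ n - 1 →
    (∏ i ∈ T, (w i + 1)) ≠ ∏ i ∈ S, (w' i + 1)

namespace ProperSubprodsNe

variable {n : ℕ} {w w' : Fin (n + 1) → K}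

theorem comp_succAbove (h : ProperSubprodsNe w w') (k l : Fin (n + 1)) :
    ProperSubprodsNe (w ∘ k.succAbove) (w' ∘ l.succAbove) := by
  intro S T hST h1 hS
  simpa [prod_map] using h (S.map l.succAboveEmb) (T.map k.succAboveEmb) (by simpa using hST)
    (by simpa using h1) (by simp; omega)

theorem prod_succAbove_ne (h : ProperSubprodsNe w w') (hn : 1 ≤ n) (k l : Fin (n + 1)) :
    ∏ i, (w (k.succAbove i) + 1) ≠ ∏ i, (w' (l.succAbove i) + 1) := by
  simpa [prod_map] using h (univ.map l.succAboveEmb) (univ.map k.succAboveEmb) (by simp)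
    (by simpa using hn) (by simp)

end ProperSubprodsNe

def cauchyMatrix {ι : Type*} (a b : ι → K) : Matrix ι ι K :=
  of fun i j => 1 / (a i - b j)

theorem exists_eval_eq_sub_mul_sum_prod {n : ℕ} {b : Fin (n + 1) → K}
    (hb : Function.Injective b) {c : K} (hc : c ∉ Set.range b) {N : K[X]}
    (hN : N.natDegree ≤ n + 1) (hNc : N.eval c = 0) :
    ∃ coef : Fin (n + 1) → K, ∀ z, N.eval z =
      (z - c) * ∑ l, coef l * ∏ j, (z - b (l.succAbove j)) := by
  have hbc : ∀ l, b l - c ≠ 0 := fun l h => hc ⟨l, sub_eq_zero.1 h⟩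
  have hbb : ∀ l j, b l - b (l.succAbove j) ≠ 0 := fun l j h =>
    Fin.succAbove_ne l j (hb (sub_eq_zero.1 h)).symm
  set coef := fun l : Fin (n + 1) => N.eval (b l) / ((b l - c) * ∏ j, (b l - b (l.succAbove j)))
    with hcoef
  set T : K[X] := (X - C c) * ∑ l, C (coef l) * ∏ j, (X - C (b (l.succAbove j)))
  have hT : T.natDegree ≤ n + 1 := by
    refine natDegree_mul_le.trans ?_
    have hsum : (∑ l, C (coef l) * ∏ j, (X - C (b (l.succAbove j)))).natDegree ≤ n :=
      natDegree_sum_le_of_forall_le _ _ fun l _ => (natDegree_C_mul_le _ _).trans (by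
        simp [natDegree_finsetProd_X_sub_C_eq_card])
    have := natDegree_X_sub_C_le c
    omega
  have hTb : ∀ l, T.eval (b l) = N.eval (b l) := by
    intro l
    simp only [T, eval_mul, eval_sub, eval_X, eval_C, eval_finsetSum, eval_prod]
    rw [sum_eq_single l]
    · rw [hcoef]
      field_simp [hbc l, prod_ne_zero_iff.2 fun j _ => hbb l j]
    · intro l' _ hl'
      obtain ⟨j, hj⟩ := Fin.exists_succAbove_eq (Ne.symm hl')
      rw [prod_eq_zero (mem_univ j) (by rw [hj, sub_self]), mul_zero]
    · simp
  have hNT : N = T := by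
    refine eq_of_natDegree_lt_card_of_eval_eq N T (Fin.cons_injective_iff.2 ⟨hc, hb⟩)
      (Fin.forall_fin_succ.2 ⟨?_, fun l => (hTb l).symm⟩) (by simp; omega)
    simp [T, hNc]
  exact ⟨coef, fun z => by simp [hNT, T, eval_finsetSum, eval_prod]⟩

theorem isMonicOfDegree_X_sub_C_mul_prod {n : ℕ} (c : K) (b : Fin n → K) :
    IsMonicOfDegree ((X - C c) * ∏ j, (X - C (b j))) (n + 1) := by
  rw [add_comm]
  exact (isMonicOfDegree_X_sub_one c).mul
    ⟨by simp [natDegree_finsetProd_X_sub_C_eq_card], monic_prod_X_sub_C b univ⟩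

theorem cauchyMatrix_mulVec_eq_of_partialFraction {n : ℕ} {a b coef : Fin (n + 1) → K} {γ : K}
    (ha0 : ∀ i, a i ≠ 0) (ha1 : ∀ i, a i + 1 ≠ 0) (hab : ∀ i j, a i ≠ b j)
    (hcoef : ∀ z, z * ∏ j, (z - b j) - (z - γ) * ∏ i, (z - a i) =
      (z + 1) * ∑ l, coef l * ∏ j, (z - b (l.succAbove j))) :
    cauchyMatrix a b *ᵥ (fun l => (∏ i, (a i + 1)) / (∏ i, a i) * coef l) =
      fun k => (∏ i, (a (k.succAbove i) + 1)) / ∏ i, a (k.succAbove i) := by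
  funext k
  have hD : ∏ j, (a k - b j) ≠ 0 := prod_ne_zero_iff.2 fun j _ => sub_ne_zero.2 (hab k j)
  have hPk : ∏ i, a (k.succAbove i) ≠ 0 := prod_ne_zero_iff.2 fun i _ => ha0 _
  have hpf : ∑ l, coef l / (a k - b l) = a k / (a k + 1) := by
    rw [eq_div_iff (ha1 k)]
    apply mul_right_cancel₀ hD
    calc (∑ l, coef l / (a k - b l)) * (a k + 1) * ∏ j, (a k - b j)
        = (a k + 1) * ∑ l, coef l * ∏ j, (a k - b (l.succAbove j)) := by
          rw [sum_mul, sum_mul, mul_sum]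
          refine sum_congr rfl fun l _ => ?_
          rw [Fin.prod_univ_succAbove _ l]
          field_simp [sub_ne_zero.2 (hab k l)]
      _ = a k * ∏ j, (a k - b j) := by
          rw [← hcoef, prod_eq_zero (f := fun i => a k - a i) (mem_univ k) (sub_self _), mul_zero,
            sub_zero]
  simp only [mulVec, dotProduct, cauchyMatrix, of_apply]
  rw [Fin.prod_univ_succAbove (fun i => a i + 1) k, Fin.prod_univ_succAbove a k]
  calc _ = (a k + 1) * (∏ i, (a (k.succAbove i) + 1)) / (a k * ∏ i, a (k.succAbove i)) *
        ∑ l, coef l / (a k - b l) := by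
        rw [mul_sum]
        exact sum_congr rfl fun l _ => by ring
    _ = _ := by
        rw [hpf]
        field_simp [ha0 k, ha1 k, hPk]

theorem dotProduct_eq_of_partialFraction {n : ℕ} {a b coef : Fin (n + 1) → K} {γ : K}
    (hP : ∏ i, a i ≠ 0) (hγ : (1 + γ) * ∏ i, (a i + 1) = ∏ j, (b j + 1))
    (hcoef : ∀ z, z * ∏ j, (z - b j) - (z - γ) * ∏ i, (z - a i) =
      (z + 1) * ∑ l, coef l * ∏ j, (z - b (l.succAbove j))) :
    (fun l => ∏ j, b (l.succAbove j)) ⬝ᵥ (fun l => (∏ i, (a i + 1)) / (∏ i, a i) * coef l) =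
      (∏ i, (a i + 1)) - ∏ j, (b j + 1) := by
  have h0 := hcoef 0
  simp only [zero_sub, prod_neg, card_univ, Fintype.card_fin, zero_mul, zero_add, one_mul,
    neg_mul, sub_neg_eq_add] at h0
  set S := ∑ l, (∏ j, b (l.succAbove j)) * coef l
  have hS : S = -γ * ∏ i, a i := by
    refine mul_left_cancel₀ (pow_ne_zero n (neg_ne_zero.2 (one_ne_zero (α := K)))) ?_
    calc (-1) ^ n * S = ∑ l, coef l * ((-1) ^ n * ∏ j, b (l.succAbove j)) := by
          simp only [S, mul_sum]
          exact sum_congr rfl fun l _ => by ring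
      _ = _ := by
          rw [← h0]
          ring
  calc _ = (∏ i, (a i + 1)) / (∏ i, a i) * S := by
        simp only [dotProduct, S, mul_sum]
        exact sum_congr rfl fun l _ => by ring
    _ = _ := by
        rw [hS, ← hγ]
        field_simp
        ring

theorem exists_cauchyMatrix_mulVec_eq {n : ℕ} {a b : Fin (n + 1) → K} (ha0 : ∀ i, a i ≠ 0)
    (ha1 : ∀ i, a i + 1 ≠ 0) (hb : Function.Injective b) (hb1 : -1 ∉ Set.range b)
    (hab : ∀ i j, a i ≠ b j) :
    ∃ x, cauchyMatrix a b *ᵥ x =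
        (fun k => (∏ i, (a (k.succAbove i) + 1)) / ∏ i, a (k.succAbove i)) ∧
      (fun l => ∏ j, b (l.succAbove j)) ⬝ᵥ x = (∏ i, (a i + 1)) - ∏ j, (b j + 1) := by
  obtain ⟨γ, hγ⟩ : ∃ γ : K, (1 + γ) * ∏ i, (a i + 1) = ∏ j, (b j + 1) :=
    ⟨(∏ j, (b j + 1)) / (∏ i, (a i + 1)) - 1, by
      rw [add_sub_cancel, div_mul_cancel₀ _ (prod_ne_zero_iff.2 fun i _ => ha1 i)]⟩
  set N : K[X] := (X - C 0) * ∏ j, (X - C (b j)) - (X - C γ) * ∏ i, (X - C (a i)) with hN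
  have hNdeg : N.natDegree ≤ n + 1 := Nat.lt_succ_iff.1 <|
    (isMonicOfDegree_X_sub_C_mul_prod 0 b).natDegree_sub_lt (by omega)
      (isMonicOfDegree_X_sub_C_mul_prod γ a)
  have hN1 : N.eval (-1) = 0 := by
    simp only [hN, eval_sub, eval_mul, eval_X, eval_C, eval_prod,
      show ∀ x : K, -1 - x = -(x + 1) from fun x => by ring, prod_neg, card_univ, Fintype.card_fin]
    linear_combination (-1) ^ (n + 1) * hγ
  obtain ⟨coef, hcoef⟩ := exists_eval_eq_sub_mul_sum_prod hb hb1 hNdeg hN1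
  have hcoef' : ∀ z, z * ∏ j, (z - b j) - (z - γ) * ∏ i, (z - a i) =
      (z + 1) * ∑ l, coef l * ∏ j, (z - b (l.succAbove j)) := fun z => by
    simpa [hN, eval_prod] using hcoef z
  exact ⟨_, cauchyMatrix_mulVec_eq_of_partialFraction ha0 ha1 hab hcoef',
    dotProduct_eq_of_partialFraction (prod_ne_zero_iff.2 fun i _ => ha0 i) hγ hcoef'⟩

end Field

theorem sum_neg_one_pow_mul_det_submatrix {R : Type*} [CommRing R] {n : ℕ}
    (A : Matrix (Fin (n + 1)) (Fin (n + 1)) R) (r s : Fin (n + 1) → R) :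
    ∑ k : Fin (n + 1), ∑ l : Fin (n + 1),
        (-1) ^ ((k : ℕ) + l) * (r k * s l * (A.submatrix k.succAbove l.succAbove).det) =
      s ⬝ᵥ (A.adjugate *ᵥ r) := by
  simp only [dotProduct, mulVec, adjugate_fin_succ_eq_det_submatrix, mul_sum]
  rw [sum_comm]
  exact sum_congr rfl fun l _ => sum_congr rfl fun k _ => by ring

theorem dotProduct_adjugate_mulVec_of_mulVec_eq {R ι : Type*} [CommRing R] [Fintype ι]
    [DecidableEq ι] {A : Matrix ι ι R} {x r : ι → R} (h : A *ᵥ x = r) (s : ι → R) :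
    s ⬝ᵥ (A.adjugate *ᵥ r) = A.det * (s ⬝ᵥ x) := by
  rw [← h, mulVec_mulVec, adjugate_mul, smul_mulVec, one_mulVec, dotProduct_smul, smul_eq_mul]

theorem eventually_add_mul_ne_zero {𝕜 : Type*} [NontriviallyNormedField 𝕜] (p : 𝕜) {q : 𝕜}
    (hq : q ≠ 0) : ∀ᶠ t in 𝓝[≠] 0, p + t * q ≠ 0 := by
  rcases eq_or_ne p 0 with rfl | hp
  · filter_upwards [self_mem_nhdsWithin] with t ht
    simpa using ⟨ht, hq⟩
  · refine nhdsWithin_le_nhds (ContinuousAt.eventually_ne (by fun_prop) ?_)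
    simpa using hp

theorem dotProduct_adjugate_cauchyMatrix_mulVec {𝕜 : Type*} [NontriviallyNormedField 𝕜]
    [CharZero 𝕜] {n : ℕ} {a : Fin (n + 1) → 𝕜} (b : Fin (n + 1) → 𝕜) (ha0 : ∀ i, a i ≠ 0)
    (ha1 : ∀ i, a i + 1 ≠ 0) (hab : ∀ i j, a i ≠ b j) :
    (fun l => ∏ j, b (l.succAbove j)) ⬝ᵥ ((cauchyMatrix a b).adjugate *ᵥ
        fun k => (∏ i, (a (k.succAbove i) + 1)) / ∏ i, a (k.succAbove i)) =
      ((∏ i, (a i + 1)) - ∏ j, (b j + 1)) * (cauchyMatrix a b).det := by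
  set d := fun j : Fin (n + 1) => (j : 𝕜) + 1
  have hd0 : ∀ j, d j ≠ 0 := fun j => by simpa [d] using Nat.cast_add_one_ne_zero (R := 𝕜) j
  have hd : Function.Injective d := fun i j h => Fin.ext (by simpa [d] using h)
  set F : 𝕜 → 𝕜 := fun t =>
    (fun l => ∏ j, (b (l.succAbove j) + t * d (l.succAbove j))) ⬝ᵥ
        ((cauchyMatrix a fun j => b j + t * d j).adjugate *ᵥ
          fun k => (∏ i, (a (k.succAbove i) + 1)) / ∏ i, a (k.succAbove i)) -
      ((∏ i, (a i + 1)) - ∏ j, (b j + t * d j + 1)) * (cauchyMatrix a fun j => b j + t * d j).det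
  suffices F 0 = 0 by simpa [F, sub_eq_zero] using this
  have hC : ContinuousAt (fun t => cauchyMatrix a fun j => b j + t * d j) 0 := by
    refine continuousAt_pi.2 fun i => continuousAt_pi.2 fun j => ?_
    refine continuousAt_const.div (by fun_prop) ?_
    simpa using sub_ne_zero.2 (hab i j)
  have hF : ContinuousAt F 0 := by fun_prop
  have hgeneric : ∀ᶠ t in 𝓝[≠] 0, F t = 0 := by
    have hinj : ∀ᶠ t in 𝓝[≠] 0, ∀ i j, i ≠ j → b i - b j + t * (d i - d j) ≠ 0 := by
      refine eventually_all.2 fun i => eventually_all.2 fun j => ?_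
      rcases eq_or_ne i j with rfl | hij
      · exact Eventually.of_forall fun _ h => absurd rfl h
      · filter_upwards [eventually_add_mul_ne_zero (b i - b j) (sub_ne_zero.2 (hd.ne hij))]
          with t ht _ using ht
    have hb1 : ∀ᶠ t in 𝓝[≠] 0, ∀ j, b j + 1 + t * d j ≠ 0 :=
      eventually_all.2 fun j => eventually_add_mul_ne_zero _ (hd0 j)
    have hab' : ∀ᶠ t in 𝓝[≠] 0, ∀ i j, b j - a i + t * d j ≠ 0 :=
      eventually_all.2 fun i => eventually_all.2 fun j => eventually_add_mul_ne_zero _ (hd0 j)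
    filter_upwards [hinj, hb1, hab'] with t hinj hb1 hab'
    obtain ⟨x, hx, hsx⟩ := exists_cauchyMatrix_mulVec_eq (b := fun j => b j + t * d j) ha0 ha1
      (fun i j h => by_contra fun hij => hinj i j hij (by linear_combination h))
      (fun ⟨j, h⟩ => hb1 j (by linear_combination h))
      (fun i j h => hab' i j (by linear_combination -h))
    simp only [F]
    rw [dotProduct_adjugate_mulVec_of_mulVec_eq hx, hsx, mul_comm, sub_self]
  exact tendsto_nhds_unique (hF.tendsto.mono_left nhdsWithin_le_nhds)
    (tendsto_const_nhds.congr' (hgeneric.mono fun t ht => ht.symm))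

theorem permSum_eq_mul_det {𝕜 : Type*} [NontriviallyNormedField 𝕜] [CharZero 𝕜] {n : ℕ}
    {w w' : Fin (n + 1) → 𝕜} (hw0 : ∀ i, w i ≠ 0) (hw1 : ∀ i, w i + 1 ≠ 0)
    (hww' : ∀ i j, w i ≠ w' j) (hprod : ProperSubprodsNe w w') :
    permSum (n + 1) w w' = ((∏ j, (w j + 1)) - ∏ j, (w' j + 1)) * (cauchyMatrix w w').det := by
  induction n with
  | zero =>
    rw [permSum_one, det_fin_one, Fin.prod_univ_one, Fin.prod_univ_one, cauchyMatrix, of_apply]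
    field_simp [sub_ne_zero.2 (hww' 0 0)]
    ring
  | succ n ih =>
    rw [permSum_succ_succ, ← dotProduct_adjugate_cauchyMatrix_mulVec w' hw0 hw1 hww',
      ← sum_neg_one_pow_mul_det_submatrix]
    refine sum_congr rfl fun k _ => sum_congr rfl fun l _ => ?_
    rw [ih (w := w ∘ k.succAbove) (w' := w' ∘ l.succAbove) (fun i => hw0 _) (fun i => hw1 _)
      (fun i j => hww' _ _) (hprod.comp_succAbove k l)]
    have hQ : ∏ i, (w (k.succAbove i) + 1) ≠ 0 := prod_ne_zero_iff.2 fun i _ => hw1 _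
    have hP : ∏ i, w (k.succAbove i) ≠ 0 := prod_ne_zero_iff.2 fun i _ => hw0 _
    have hQQ' := sub_ne_zero.2 (hprod.prod_succAbove_ne (by omega) k l)
    field_simp
    rfl

/-- Indices are 0-based: the 1-based index `i` corresponds to `i.val + 1`, so the
exponent `i - 1` becomes `(i : ℕ)`, the product over `j = 2, …, n` becomes the
product over `j : Fin n` with `0 < (j : ℕ)`, and the product over `i = j, …, n`
becomes the product over `i : Fin n` with `j ≤ i`. -/
theorem perm_sum_eq_cauchy
    (n : ℕ) (hn : 1 ≤ n) (w w' : Fin n → ℂ)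
    (hw0 : ∀ i, w i ≠ 0) (hw1 : ∀ i, w i ≠ -1)
    (hww' : ∀ i j, w i ≠ w' j)
    (hprod : ∀ S T : Finset (Fin n), S.card = T.card → 1 ≤ S.card → S.card ≤ n - 1 →
      (∏ i ∈ T, (w i + 1)) ≠ ∏ i ∈ S, (w' i + 1)) :
    (∑ σ : Equiv.Perm (Fin n), ∑ σ' : Equiv.Perm (Fin n),
        ((Equiv.Perm.sign σ : ℤ) : ℂ) * ((Equiv.Perm.sign σ' : ℤ) : ℂ) *
          (∏ i : Fin n, (w' (σ' i) / w (σ i)) ^ (i : ℕ)) /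
          ∏ j ∈ Finset.univ.filter (fun j : Fin n => 0 < (j : ℕ)),
            (1 - ∏ i ∈ Finset.univ.filter (fun i : Fin n => j ≤ i),
              ((w' (σ' i) + 1) / (w (σ i) + 1)))) =
      ((∏ j, (w j + 1)) - ∏ j, (w' j + 1)) *
        Matrix.det (Matrix.of fun i i' : Fin n => 1 / (w i - w' i')) := by
  obtain ⟨m, rfl⟩ : ∃ m, n = m + 1 := ⟨n - 1, by omega⟩
  exact permSum_eq_mul_det hw0 (fun i h => hw1 i (eq_neg_of_add_eq_zero_left h)) hww' hprod
end

section
/- Let n ≥ 1 and let x_1,…,x_n be distinct complex numbers and y_1,…,y_n distinct complex numbers with x_i ≠ y_j for all i,j. Assume additionally x_i ≠ −1 and y_j ≠ 0 for all i, j. Let C be the Cauchy matrix C_{ij} = 1/(x_i − y_j), let C_{ℓ,k} denote the (n−1)×(n−1) matrix obtained from C by deleting row ℓ and column k, and set A(ζ) = ∏_{i=1}^n (ζ − x_i), B(ζ) = ∏_{i=1}^n (ζ − y_i). Then ∑_{ℓ=1}^n ∑_{k=1}^n (−1)^{ℓ+k} · ( x_ℓ / ((x_ℓ+1) y_k) )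 · det(C_{ℓ,k}) = ( A(0)/B(0) ) · ( 1 − B(−1)/A(−1) ) · det(C). -/
/-!
With `f ℓ = x ℓ / (x ℓ + 1)` and `g k = 1 / y k`, the double sum is `g ⬝ᵥ adj(C) f`. If
`C w = f`, then `adj(C) f = det C • w`, so the sum equals `det C * ∑ w k / y k`.

The system `C w = f` is solved by partial fractions: for `deg P ≤ n` and
`w k = P(y k) / B'(y k)` one has `∑ w k / (z - y k) = P(z) / B(z)` whenever `z` is not a node.
The numerator `z B(z) - (z - c) A(z)`, with `c = B(-1)/A(-1) - 1`, has degree `≤ n + 1` (as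
`A`, `B` are monic of the same degree) and vanishes at `-1`; its quotient `P` by `z + 1`
satisfies `P(x ℓ) / B(x ℓ) = f ℓ` since `A(x ℓ) = 0`, and `P(0) = c A(0)`.
-/

open Polynomial Finset Matrix Lagrange

section Field

variable {F ι : Type*} [Field F] [DecidableEq ι]

theorem sum_nodalWeight_mul_inv_sub_mul_eval {s : Finset ι} {v : ι → F} (hvs : Set.InjOn v s)
    {P : F[X]} (hP : P.degree < #s) {z : F} (hz : ∀ i ∈ s, z ≠ v i) :
    ∑ i ∈ s, nodalWeight s v i * (z - v i)⁻¹ * P.eval (v i) = P.eval z / (nodal s v).eval z := by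
  rw [eq_div_iff (eval_nodal_not_at_node hz), mul_comm, ← eval_interpolate_not_at_node _ hz,
    ← eq_interpolate hvs hP]

theorem cauchy_mulVec_nodalWeight_mul_eval {κ : Type*} [Fintype ι] (x : κ → F) {y : ι → F}
    (hy : Function.Injective y) (hxy : ∀ i j, x i ≠ y j) {P : F[X]}
    (hP : P.degree < Fintype.card ι) :
    (of fun i j => 1 / (x i - y j)) *ᵥ (fun j => nodalWeight univ y j * P.eval (y j)) =
      fun i => P.eval (x i) / (nodal univ y).eval (x i) := by
  funext i
  rw [← sum_nodalWeight_mul_inv_sub_mul_eval hy.injOn (by simpa using hP) fun j _ => hxy i j]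
  simp only [mulVec, dotProduct, of_apply, one_div]
  exact sum_congr rfl fun j _ => by ring

theorem exists_degree_lt_add_one_mul_eval_eq {A B : F[X]} {d : ℕ} (hd : d ≠ 0)
    (hA : A.IsMonicOfDegree d) (hB : B.IsMonicOfDegree d) (hA1 : A.eval (-1) ≠ 0) :
    ∃ P : F[X], P.degree < d ∧ ∀ z, (z + 1) * P.eval z =
      z * B.eval z - (z - (B.eval (-1) / A.eval (-1) - 1)) * A.eval z := by
  set c := B.eval (-1) / A.eval (-1) - 1
  set N := X * (B - A) + C c * A
  have hroot : N.IsRoot (-1) := by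
    simp only [N, c, IsRoot, eval_add, eval_mul, eval_sub, eval_X, eval_C]
    field_simp
    ring
  have hNdeg : N.natDegree ≤ d := by
    have hBA : (B - A).natDegree < d := hB.natDegree_sub_lt hd hA
    refine natDegree_add_le_of_degree_le ?_ ?_
    · exact natDegree_mul_le.trans (by rw [natDegree_X]; omega)
    · exact (natDegree_C_mul_le c A).trans hA.natDegree_eq.le
  refine ⟨N /ₘ (X - C (-1)), ?_, fun z => ?_⟩
  · refine degree_le_natDegree.trans_lt ?_
    rw [natDegree_divByMonic _ (monic_X_sub_C _), natDegree_X_sub_C]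
    exact_mod_cast (show N.natDegree - 1 < d by omega)
  · have h := congrArg (eval z) (mul_divByMonic_eq_iff_isRoot.mpr hroot)
    simp only [N, eval_add, eval_mul, eval_sub, eval_X, eval_C] at h
    linear_combination h

end Field

theorem dotProduct_adjugate_mulVec_fin_succ {R : Type*} [CommRing R] {n : ℕ}
    (M : Matrix (Fin (n + 1)) (Fin (n + 1)) R) (f g : Fin (n + 1) → R) :
    g ⬝ᵥ (adjugate M *ᵥ f) = ∑ ℓ : Fin (n + 1), ∑ k : Fin (n + 1),
      (-1 : R) ^ ((ℓ : ℕ) + (k : ℕ)) * (f ℓ * g k) * det (M.submatrix ℓ.succAbove k.succAbove) := by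
  simp only [dotProduct, mulVec, mul_sum, adjugate_fin_succ_eq_det_submatrix]
  rw [sum_comm]
  exact sum_congr rfl fun k _ => sum_congr rfl fun ℓ _ => by ring

theorem cauchy_minor_sum_general
    (n : ℕ) (x y : Fin (n + 1) → ℂ)
    (hy : Function.Injective y)
    (hxy : ∀ i j, x i ≠ y j)
    (hx1 : ∀ i, x i ≠ -1) (hy0 : ∀ j, y j ≠ 0) :
    (∑ ℓ : Fin (n + 1), ∑ k : Fin (n + 1),
        (-1 : ℂ) ^ ((ℓ : ℕ) + (k : ℕ)) * (x ℓ / ((x ℓ + 1) * y k)) *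
          Matrix.det ((Matrix.of fun i j : Fin (n + 1) => 1 / (x i - y j)).submatrix
            ℓ.succAbove k.succAbove)) =
      ((∏ i, ((0 : ℂ) - x i)) / ∏ i, ((0 : ℂ) - y i)) *
        (1 - (∏ i, ((-1 : ℂ) - y i)) / ∏ i, ((-1 : ℂ) - x i)) *
        Matrix.det (Matrix.of fun i j : Fin (n + 1) => 1 / (x i - y j)) := by
  set M : Matrix (Fin (n + 1)) (Fin (n + 1)) ℂ := of fun i j => 1 / (x i - y j)
  have hnodal (v : Fin (n + 1) → ℂ) : (nodal univ v).IsMonicOfDegree (n + 1) :=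
    ⟨by simp [natDegree_nodal], nodal_monic⟩
  have hA1 : (nodal univ x).eval (-1) ≠ 0 := eval_nodal_not_at_node fun i _ => (hx1 i).symm
  have hB0 : (nodal univ y).eval 0 ≠ 0 := eval_nodal_not_at_node fun j _ => (hy0 j).symm
  obtain ⟨P, hPdeg, hP⟩ :=
    exists_degree_lt_add_one_mul_eval_eq n.succ_ne_zero (hnodal x) (hnodal y) hA1
  set w : Fin (n + 1) → ℂ := fun k => nodalWeight univ y k * P.eval (y k)
  have hMw : M *ᵥ w = fun ℓ => x ℓ / (x ℓ + 1) := by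
    rw [cauchy_mulVec_nodalWeight_mul_eval x hy hxy (by simpa using hPdeg)]
    funext ℓ
    have hℓ := hP (x ℓ)
    rw [eval_nodal_at_node (mem_univ ℓ)] at hℓ
    have hBℓ : (nodal univ y).eval (x ℓ) ≠ 0 := eval_nodal_not_at_node fun j _ => hxy ℓ j
    have hxℓ : x ℓ + 1 ≠ 0 := fun h => hx1 ℓ (eq_neg_of_add_eq_zero_left h)
    field_simp
    linear_combination hℓ
  have hw : (fun k => (y k)⁻¹) ⬝ᵥ w = -(P.eval 0 / (nodal univ y).eval 0) := by
    rw [← sum_nodalWeight_mul_inv_sub_mul_eval hy.injOn (by simpa using hPdeg)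
      fun j _ => (hy0 j).symm, ← sum_neg_distrib]
    exact sum_congr rfl fun k _ => by simp only [w, zero_sub, inv_neg]; ring
  have hP0 : P.eval 0 = ((nodal univ y).eval (-1) / (nodal univ x).eval (-1) - 1) *
      (nodal univ x).eval 0 := by
    linear_combination hP 0
  simp only [eval_nodal] at hA1 hB0 hw hP0
  calc _ = (fun k => (y k)⁻¹) ⬝ᵥ (adjugate M *ᵥ fun ℓ => x ℓ / (x ℓ + 1)) := by
        rw [dotProduct_adjugate_mulVec_fin_succ]
        simp only [div_eq_mul_inv, mul_inv, mul_assoc]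
    _ = det M * ((fun k => (y k)⁻¹) ⬝ᵥ w) := by
        rw [← hMw, mulVec_mulVec, adjugate_mul, smul_mulVec, one_mulVec, dotProduct_smul,
          smul_eq_mul]
    _ = _ := by
        rw [hw, hP0]
        field_simp
        ring

/-- Summation identity for minors of a Cauchy matrix (Lemma: sumCauchyq).
The matrix size is `n + 1 ≥ 1`; `C_{ℓ,k}` is realized as the `succAbove`
submatrix, and `(-1)^{ℓ+k}` with 1-based `ℓ, k` equals `(-1)^{ℓ₀+k₀}` for the
0-based indices `ℓ₀, k₀`. Here `A(ζ) = ∏ (ζ - x_i)` and `B(ζ) = ∏ (ζ - y_i)`. -/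
theorem cauchy_minor_sum
    (n : ℕ) (x y : Fin (n + 1) → ℂ)
    (hx : Function.Injective x) (hy : Function.Injective y)
    (hxy : ∀ i j, x i ≠ y j)
    (hx1 : ∀ i, x i ≠ -1) (hy0 : ∀ j, y j ≠ 0) :
    (∑ ℓ : Fin (n + 1), ∑ k : Fin (n + 1),
        (-1 : ℂ) ^ ((ℓ : ℕ) + (k : ℕ)) * (x ℓ / ((x ℓ + 1) * y k)) *
          Matrix.det ((Matrix.of fun i j : Fin (n + 1) => 1 / (x i - y j)).submatrix
            ℓ.succAbove k.succAbove)) =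
      ((∏ i, ((0 : ℂ) - x i)) / ∏ i, ((0 : ℂ) - y i)) *
        (1 - (∏ i, ((-1 : ℂ) - y i)) / ∏ i, ((-1 : ℂ) - x i)) *
        Matrix.det (Matrix.of fun i j : Fin (n + 1) => 1 / (x i - y j)) :=
  cauchy_minor_sum_general n x y hy hxy hx1 hy0
end

section
/- Let n ≥ 1 and let x_1,…,x_n be distinct complex numbers and y_1,…,y_n distinct complex numbers with x_i ≠ y_j for all i,j; assume x_i ≠ −1 and y_j ≠ 0 for all i, j. Then det[ 1/(x_i − y_j) + x_i/((x_i+1) y_j) ]_{i,j=1}^n = ( 1 + A(0)/B(0) − A(0)B(−1)/(B(0)A(−1)) ) · det[ 1/(x_i − y_j) ]_{i,j=1}^n. -/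
open scoped BigOperators

open Polynomial Finset

/-- Rank-one perturbation of a Cauchy determinant:
`det[1/(x_i−y_j) + x_i/((x_i+1)y_j)] = (1 + A(0)/B(0) − A(0)B(−1)/(B(0)A(−1))) det[1/(x_i−y_j)]`,
where `A(ζ) = ∏ (ζ − x_i)` and `B(ζ) = ∏ (ζ − y_i)`. -/
theorem cauchy_det_rank_one_perturbation
    (n : ℕ) (hn : 1 ≤ n) (x y : Fin n → ℂ)
    (hx : Function.Injective x) (hy : Function.Injective y)
    (hxy : ∀ i j, x i ≠ y j)
    (hx1 : ∀ i, x i ≠ -1) (hy0 : ∀ j, y j ≠ 0) :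
    Matrix.det (Matrix.of fun i j : Fin n =>
        1 / (x i - y j) + x i / ((x i + 1) * y j)) =
      (1 + (∏ i, ((0 : ℂ) - x i)) / (∏ i, ((0 : ℂ) - y i)) -
          (∏ i, ((0 : ℂ) - x i)) * (∏ i, ((-1 : ℂ) - y i)) /
            ((∏ i, ((0 : ℂ) - y i)) * ∏ i, ((-1 : ℂ) - x i))) *
        Matrix.det (Matrix.of fun i j : Fin n => 1 / (x i - y j)) := by
  classical
  set Ap : ℂ[X] := Lagrange.nodal Finset.univ x with hApdef
  set Bp : ℂ[X] := Lagrange.nodal Finset.univ y with hBpdef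
  have hevalA : ∀ t : ℂ, Ap.eval t = ∏ i, (t - x i) := fun t => Lagrange.eval_nodal
  have hevalB : ∀ t : ℂ, Bp.eval t = ∏ i, (t - y i) := fun t => Lagrange.eval_nodal
  have hAm1 : (∏ i, ((-1:ℂ) - x i)) ≠ 0 := by
    apply Finset.prod_ne_zero_iff.mpr
    intro i _ h
    exact hx1 i (by linear_combination -h)
  have hB0 : (∏ i, ((0:ℂ) - y i)) ≠ 0 := by
    apply Finset.prod_ne_zero_iff.mpr
    intro i _ h
    exact hy0 i (by linear_combination -h)
  have hBx : ∀ i, (∏ k, (x i - y k)) ≠ 0 := by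
    intro i
    apply Finset.prod_ne_zero_iff.mpr
    intro k _
    exact sub_ne_zero_of_ne (hxy i k)
  have hx1' : ∀ i, x i + 1 ≠ 0 := fun i h => hx1 i (by linear_combination h)
  set c : ℂ := 1 - (∏ i, ((-1:ℂ) - y i)) / (∏ i, ((-1:ℂ) - x i)) with hcdef
  set Q : ℂ[X] := X * Bp - (X + C c) * Ap with hQdef
  have hQroot : Q.IsRoot (-1) := by
    have h : Q.eval (-1) = (-1) * (∏ i, ((-1:ℂ) - y i)) - (-1 + c) * (∏ i, ((-1:ℂ) - x i)) := by
      simp [hQdef, hevalA, hevalB]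
    rw [Polynomial.IsRoot, h, hcdef]
    field_simp
    ring
  obtain ⟨P, hP⟩ : (X - C (-1:ℂ)) ∣ Q := Polynomial.dvd_iff_isRoot.mpr hQroot
  -- degree bound for Q, hence for P
  have hmonB : (X * Bp).Monic := monic_X.mul Lagrange.nodal_monic
  have hmonA : ((X + C c) * Ap).Monic := (monic_X_add_C c).mul Lagrange.nodal_monic
  have hdB : (X * Bp).degree = ((n + 1 : ℕ) : WithBot ℕ) := by
    rw [degree_mul, degree_X, hBpdef, Lagrange.degree_nodal]
    simp [add_comm]
  have hdA : ((X + C c) * Ap).degree = ((n + 1 : ℕ) : WithBot ℕ) := by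
    rw [degree_mul, degree_X_add_C, hApdef, Lagrange.degree_nodal]
    simp [add_comm]
  have hdQ : Q.degree < ((n + 1 : ℕ) : WithBot ℕ) := by
    rw [hQdef, ← hdB]
    exact Polynomial.degree_sub_lt (hdB.trans hdA.symm) hmonB.ne_zero
      (by rw [hmonB.leadingCoeff, hmonA.leadingCoeff])
  have hdP : P.degree < (n : WithBot ℕ) := by
    rcases eq_or_ne P 0 with h | h
    · rw [h, degree_zero]
      exact WithBot.bot_lt_coe n
    · have hdq : Q.degree = 1 + P.degree := by
        rw [hP, degree_mul, degree_X_sub_C]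
      rw [hdq, Polynomial.degree_eq_natDegree h] at hdQ
      have h2 : 1 + P.natDegree < n + 1 := by exact_mod_cast hdQ
      rw [Polynomial.degree_eq_natDegree h]
      exact_mod_cast (by omega : P.natDegree < n)
  -- interpolation of P at the nodes y
  have hvs : Set.InjOn y (Finset.univ : Finset (Fin n)) := fun a _ b _ hab => hy hab
  have hPi : P = Lagrange.interpolate Finset.univ y fun i => P.eval (y i) := by
    apply Lagrange.eq_interpolate hvs
    simpa using hdP
  set w : Fin n → ℂ := fun j => Lagrange.nodalWeight Finset.univ y j * P.eval (y j) with hwdef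
  have key : ∀ z : ℂ, (∀ j, z ≠ y j) →
      ∑ j, w j * (z - y j)⁻¹ = P.eval z / ∏ k, (z - y k) := by
    intro z hz
    have hz0 : (∏ k, (z - y k)) ≠ 0 :=
      Finset.prod_ne_zero_iff.mpr fun k _ => sub_ne_zero_of_ne (hz k)
    have h := Lagrange.eval_interpolate_not_at_node (s := Finset.univ) (v := y)
      (x := z) (fun i => P.eval (y i)) (fun i _ => hz i)
    rw [← hPi, Lagrange.eval_nodal] at h
    rw [eq_div_iff hz0, h, Finset.sum_mul, Finset.mul_sum]
    apply Finset.sum_congr rfl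
    intro j _
    ring
  -- evaluation of Q at the x i and at 0
  have hQx : ∀ i, (x i + 1) * P.eval (x i) = x i * (∏ k, (x i - y k)) := by
    intro i
    have h1 : Q.eval (x i) = (x i + 1) * P.eval (x i) := by
      rw [hP]
      simp

    have h2 : Q.eval (x i) = x i * (∏ k, (x i - y k)) := by
      have hA0 : (∏ k, (x i - x k)) = 0 :=
        Finset.prod_eq_zero (Finset.mem_univ i) (by simp)
      simp [hQdef, hevalA, hevalB, hA0]

    rw [← h1, h2]
  have hQ0 : P.eval 0 = -c * ∏ i, ((0:ℂ) - x i) := by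
    have h1 : Q.eval 0 = P.eval 0 := by
      rw [hP]
      simp
    have h2 : Q.eval 0 = -c * ∏ i, ((0:ℂ) - x i) := by
      simp [hQdef, hevalA, hevalB]
    rw [← h1, h2]
  -- the matrix factorization
  set v : Fin n → ℂ := fun j => (y j)⁻¹ with hvdef
  have hCw : ∀ i, (∑ k, (1 / (x i - y k)) * w k) = x i / (x i + 1) := by
    intro i
    have h := key (x i) (hxy i)
    have hPx : P.eval (x i) = x i * (∏ k, (x i - y k)) / (x i + 1) := by
      rw [eq_div_iff (hx1' i), mul_comm (P.eval (x i))]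
      exact hQx i
    rw [hPx] at h
    calc (∑ k, (1 / (x i - y k)) * w k) = ∑ k, w k * (x i - y k)⁻¹ := by
          apply Finset.sum_congr rfl; intro k _; rw [one_div]; ring
      _ = x i * (∏ k, (x i - y k)) / (x i + 1) / ∏ k, (x i - y k) := h
      _ = x i / (x i + 1) := by
          rw [div_right_comm, mul_div_cancel_right₀ _ (hBx i)]
  have hvw : ∑ j, v j * w j = c * (∏ i, ((0:ℂ) - x i)) / (∏ i, ((0:ℂ) - y i)) := by
    have h := key 0 (fun j h => hy0 j h.symm)
    have h2 : ∑ j, v j * w j = -∑ j, w j * ((0:ℂ) - y j)⁻¹ := by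
      rw [← Finset.sum_neg_distrib]
      apply Finset.sum_congr rfl
      intro j _
      rw [hvdef]
      simp only [zero_sub, inv_neg, mul_neg, neg_neg]
      ring
    rw [h2, h, hQ0]
    ring
  have hM : (Matrix.of fun i j : Fin n => 1 / (x i - y j) + x i / ((x i + 1) * y j)) =
      (Matrix.of fun i j : Fin n => 1 / (x i - y j)) *
        (1 + Matrix.replicateCol Unit w * Matrix.replicateRow Unit v) := by
    rw [Matrix.mul_add, Matrix.mul_one]
    ext i j
    rw [Matrix.add_apply, Matrix.of_apply, Matrix.of_apply]
    congr 1
    symm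
    rw [Matrix.mul_apply]
    have hcr : ∀ k, (Matrix.replicateCol Unit w * Matrix.replicateRow Unit v) k j = w k * v j := by
      intro k
      rw [Matrix.mul_apply]
      simp
    calc ∑ k, (Matrix.of fun i j : Fin n => 1 / (x i - y j)) i k *
            (Matrix.replicateCol Unit w * Matrix.replicateRow Unit v) k j
        = (∑ k, (1 / (x i - y k)) * w k) * v j := by
          rw [Finset.sum_mul]
          apply Finset.sum_congr rfl
          intro k _
          rw [hcr k, Matrix.of_apply]
          ring
      _ = (x i / (x i + 1)) * (y j)⁻¹ := by rw [hCw i]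
      _ = x i / ((x i + 1) * y j) := by rw [← div_eq_mul_inv, div_div]
  rw [hM, Matrix.det_mul, Matrix.det_one_add_replicateCol_mul_replicateRow w v]
  rw [dotProduct, hvw, mul_comm]
  congr 1
  rw [hcdef]
  have hB0' : (∏ i, -(y i)) ≠ 0 := by simpa using hB0
  simp only [zero_sub]
  field_simp [hAm1, hB0']
  ring
end

section
/- Let n ≥ 1, let x_1,…,x_n be distinct complex numbers and y_1,…,y_n distinct complex numbers with x_i ≠ y_j for all i,j, assume x_i ≠ 0 for all i, and let u ∈ ℂ. Then det[ 1/(x_i − y_j) + u/x_i ]_{i,j=1}^n = ( 1 + u (1 − B(0)/A(0)) ) · det[ 1/(x_i − y_j) ]_{i,j=1}^n (the rank-one perturbation u/x_i depends only on the row index i). -/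
/-!
The perturbed matrix is `C + v wᵀ` with `C` the Cauchy matrix, `v = (1/x_i)_i` and
`w = (u, …, u)`. If `C z = v` then `C + v wᵀ = C (1 + z wᵀ)`, whose determinant is
`(1 + u ∑ z_j) det C`. Such a `z` comes from partial fractions: with `c = B(0)/A(0)` the
polynomial `B - c A` vanishes at `0`, so `B(ζ) - c A(ζ) = ζ h(ζ)` with `deg h < n`, and
`h(ζ)/B(ζ) = ∑_j z_j / (ζ - y_j)`. At `ζ = x_i`, where `A` vanishes, this equals `1/x_i`, and
`∑_j z_j` is the coefficient of `ζ^(n-1)` in `h`, i.e. the leading coefficient `1 - c` of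
`B - c A`.
-/

open Polynomial Finset

namespace Lagrange

variable {F ι : Type*} [Field F] [DecidableEq ι] {s : Finset ι} {v : ι → F} {P : F[X]}

theorem sum_nodalWeight_mul_eval_div_sub (hvs : Set.InjOn v s) (hP : P.degree < #s) {x : F}
    (hx : ∀ i ∈ s, x ≠ v i) :
    ∑ i ∈ s, nodalWeight s v i * P.eval (v i) / (x - v i) = P.eval x / (nodal s v).eval x := by
  rw [eq_div_iff (eval_nodal_not_at_node hx), eq_interpolate hvs hP,
    eval_interpolate_not_at_node _ hx, mul_comm]
  simp only [← eq_interpolate hvs hP]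
  exact congrArg _ (sum_congr rfl fun i _ => by ring)

theorem sum_nodalWeight_mul_eval (hvs : Set.InjOn v s) (hP : P.degree < #s) :
    ∑ i ∈ s, nodalWeight s v i * P.eval (v i) = P.coeff (#s - 1) := by
  rw [coeff_eq_sum hvs hP]
  refine sum_congr rfl fun i _ => ?_
  rw [nodalWeight, prod_inv_distrib, div_eq_mul_inv, mul_comm]

end Lagrange

namespace Matrix

variable {n R : Type*} [Fintype n] [DecidableEq n] [CommRing R]

theorem det_add_replicateCol_mul_replicateRow_of_mulVec_eq {ι : Type*} [Unique ι]
    {A : Matrix n n R} {z v : n → R} (hz : A *ᵥ z = v) (w : n → R) :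
    (A + replicateCol ι v * replicateRow ι w).det = A.det * (1 + w ⬝ᵥ z) := by
  have hfactor : A + replicateCol ι v * replicateRow ι w =
      A * (1 + replicateCol ι z * replicateRow ι w) := by
    rw [Matrix.mul_add, Matrix.mul_one, ← Matrix.mul_assoc, ← replicateCol_mulVec, hz]
  rw [hfactor, det_mul, det_one_add_replicateCol_mul_replicateRow]

end Matrix

open Lagrange Matrix in
theorem exists_cauchy_mulVec_eq_one_div {K ι : Type*} [Field K] [Fintype ι] [DecidableEq ι]
    [Nonempty ι] (x y : ι → K) (hy : Function.Injective y) (hxy : ∀ i j, x i ≠ y j)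
    (hx0 : ∀ i, x i ≠ 0) :
    ∃ z : ι → K, of (fun i j => 1 / (x i - y j)) *ᵥ z = (fun i => 1 / x i) ∧
      ∑ j, z j = 1 - (∏ i, (0 - y i)) / ∏ i, (0 - x i) := by
  set A := nodal univ x
  set B := nodal univ y
  set c := B.eval 0 / A.eval 0
  have hA0 : A.eval 0 ≠ 0 := eval_nodal_not_at_node fun i _ => (hx0 i).symm
  obtain ⟨h, hp⟩ : X ∣ B - C c * A := by
    rw [X_dvd_iff, coeff_zero_eq_eval_zero, eval_sub, eval_mul, eval_C,
      div_mul_cancel₀ _ hA0, sub_self]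
  have hnatDeg (v : ι → K) : (nodal univ v).natDegree = Fintype.card ι := natDegree_nodal
  have hp_top : (B - C c * A).coeff (Fintype.card ι) = 1 - c := by
    rw [coeff_sub, coeff_C_mul, ← hnatDeg y, nodal_monic.coeff_natDegree, hnatDeg y,
      ← hnatDeg x, nodal_monic.coeff_natDegree, mul_one]
  have hdeg : h.degree < #(univ : Finset ι) := by
    refine degree_lt_iff_coeff_zero _ _ |>.mpr fun m hm => ?_
    have hm' : Fintype.card ι < m + 1 := by rw [card_univ] at hm; omega
    rw [← coeff_X_mul, ← hp, coeff_sub, coeff_C_mul,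
      coeff_eq_zero_of_natDegree_lt (hnatDeg y ▸ hm'),
      coeff_eq_zero_of_natDegree_lt (hnatDeg x ▸ hm'), mul_zero, sub_zero]
  refine ⟨fun j => nodalWeight univ y j * h.eval (y j), ?_, ?_⟩
  · ext i
    have hB : B.eval (x i) ≠ 0 := eval_nodal_not_at_node fun j _ => hxy i j
    have hxh : x i * h.eval (x i) = B.eval (x i) := by
      have hA : A.eval (x i) = 0 := eval_nodal_at_node (mem_univ i)
      simpa [hA] using (congrArg (eval (x i)) hp).symm
    simp only [mulVec, dotProduct, of_apply, one_div_mul_eq_div]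
    rw [sum_nodalWeight_mul_eval_div_sub hy.injOn hdeg fun j _ => hxy i j,
      div_eq_div_iff hB (hx0 i), one_mul, mul_comm, hxh]
  · rw [sum_nodalWeight_mul_eval hy.injOn hdeg, card_univ, ← coeff_X_mul,
      Nat.sub_add_cancel Fintype.card_pos, ← hp, hp_top]
    simp only [c, B, A, eval_nodal, zero_sub]

theorem cauchy_det_row_perturbation_general
    (n : ℕ) (hn : 1 ≤ n) (x y : Fin n → ℂ)
    (hy : Function.Injective y)
    (hxy : ∀ i j, x i ≠ y j)
    (hx0 : ∀ i, x i ≠ 0) (u : ℂ) :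
    Matrix.det (Matrix.of fun i j : Fin n => 1 / (x i - y j) + u / x i) =
      (1 + u * (1 - (∏ i, ((0 : ℂ) - y i)) / ∏ i, ((0 : ℂ) - x i))) *
        Matrix.det (Matrix.of fun i j : Fin n => 1 / (x i - y j)) := by
  have : Nonempty (Fin n) := ⟨⟨0, hn⟩⟩
  obtain ⟨z, hz, hsum⟩ := exists_cauchy_mulVec_eq_one_div x y hy hxy hx0
  have hrankOne : Matrix.of (fun i j : Fin n => 1 / (x i - y j) + u / x i) =
      Matrix.of (fun i j => 1 / (x i - y j)) +
        Matrix.replicateCol Unit (fun i => 1 / x i) * Matrix.replicateRow Unit (fun _ => u) := by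
    ext i j
    simp [Matrix.mul_apply, div_eq_mul_inv, mul_comm]
  rw [hrankOne, Matrix.det_add_replicateCol_mul_replicateRow_of_mulVec_eq hz, ← hsum,
    dotProduct, ← mul_sum, mul_comm]

/-- Rank-one row perturbation of a Cauchy determinant (Lemma: sumCauchyq2):
`det[1/(x_i−y_j) + u/x_i] = (1 + u(1 − B(0)/A(0))) det[1/(x_i−y_j)]`,
where `A(ζ) = ∏ (ζ − x_i)` and `B(ζ) = ∏ (ζ − y_i)`. -/
theorem cauchy_det_row_perturbation
    (n : ℕ) (hn : 1 ≤ n) (x y : Fin n → ℂ)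
    (hx : Function.Injective x) (hy : Function.Injective y)
    (hxy : ∀ i j, x i ≠ y j)
    (hx0 : ∀ i, x i ≠ 0) (u : ℂ) :
    Matrix.det (Matrix.of fun i j : Fin n => 1 / (x i - y j) + u / x i) =
      (1 + u * (1 - (∏ i, ((0 : ℂ) - y i)) / ∏ i, ((0 : ℂ) - x i))) *
        Matrix.det (Matrix.of fun i j : Fin n => 1 / (x i - y j)) :=
  cauchy_det_row_perturbation_general n hn x y hy hxy hx0 u
end

section
/- Let m, n ≥ 0 and let U = (u_1,…,u_m), V = (v_1,…,v_m), U′ = (u′_1,…,u′_n), V′ = (v′_1,…,v′_n) be complex vectors such that u_i ≠ v_j (1 ≤ i,j ≤ m), u′_i ≠ v′_j (1 ≤ i,j ≤ n), u′_i ≠ u_j and v′_i ≠ v_j (1 ≤ i ≤ n, 1 ≤ j ≤ m). Then for arbitrary functions 𝓕, 𝓖, 𝓘, 𝓙 : ℂ → ℂ: [ Δ(U)Δ(V)Δ(U′)Δ(V′)Δ(U′;V)Δ(V′;U) / ( Δ(U;V)Δ(U′;V′)Δ(U′;U)Δ(V′;V) ) ] · 𝓕(U)𝓖(V)𝓘(U′)𝓙(V′)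 = (−1)^{C(n+m,2)+n+mn} · det M, where C(n+m,2) is the binomial coefficient (n+m choose 2) and M is the (m+n)×(m+n) block matrix whose upper-left m×m block has entries 𝓕(u_i)𝓖(v_j)/(u_i−v_j), upper-right m×n block has entries 𝓕(u_i)𝓘(u′_j)/(u_i−u′_j), lower-left n×m block has entries 𝓙(v′_i)𝓖(v_j)/(v′_i−v_j), and lower-right n×n block has entries 𝓙(v′_i)𝓘(u′_j)/(v′_i−u′_j). -/
/-!
Put `x = u ++ v'`, `y = v ++ u'`, `a = 𝓕(u) ++ 𝓙(v')`, `b = 𝓖(v) ++ 𝓘(u')`. Up to reindexing the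
block matrix is the weighted Cauchy matrix `(a_i b_j / (x_i - y_j))` of size `k = m + n`, whose
determinant is `∏ a · ∏ b · (-1)^C(k,2) Δ(x) Δ(y) / Δ(x;y)`. The Cauchy formula follows by induction
on `k`: the Schur complement of the corner entry `1 / (x_0 - y_0)` is again a Cauchy matrix, rescaled
by rows and columns. Splitting the products for the concatenations and reversing `Δ(u;u')` and
`Δ(v';u')` leaves a sign with exponent `2 C(m+n,2) + 2mn + n(n+1)`, which is even.
-/

open scoped BigOperators

/-- `Δ(W) = ∏_{i<j} (w_j − w_i)`. -/
noncomputable def vdm {k : ℕ} (W : Fin k → ℂ) : ℂ :=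
  ∏ p ∈ Finset.univ.filter (fun p : Fin k × Fin k => p.1 < p.2), (W p.2 - W p.1)

/-- `Δ(W;W') = ∏_{i,i'} (w_i − w'_{i'})`. -/
noncomputable def vdm2 {k k' : ℕ} (W : Fin k → ℂ) (W' : Fin k' → ℂ) : ℂ :=
  ∏ i, ∏ i', (W i - W' i')

open Matrix Finset

theorem Matrix.det_succ_eq_mul_det_schur {K : Type*} [Field K] {n : ℕ}
    (A : Matrix (Fin (n + 1)) (Fin (n + 1)) K) (h : A 0 0 ≠ 0) :
    A.det =
      A 0 0 * (of fun i j : Fin n => A i.succ j.succ - A i.succ 0 * A 0 j.succ / A 0 0).det := by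
  set c : Fin (n + 1) → K := Fin.cons 0 fun i => A i.succ 0 / A 0 0
  set B : Matrix (Fin (n + 1)) (Fin (n + 1)) K := of fun i j => A i j - c i * A 0 j
  have hB0 : ∀ j, B 0 j = A 0 j := by simp [B, c]
  have hAB : A.det = B.det :=
    det_eq_of_forall_row_eq_smul_add_const c 0 rfl fun i j => by simp [B, hB0]
  rw [hAB, det_succ_column_zero, Fin.sum_univ_succ]
  have hcol : ∀ i : Fin n, B i.succ 0 = 0 := fun i => by simp [B, c, h]
  simp only [hcol, mul_zero, zero_mul, Finset.sum_const_zero, add_zero, Fin.val_zero, pow_zero,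
    one_mul, hB0, Fin.succAbove_zero]
  congr 2
  ext i j
  simp only [submatrix_apply, of_apply, Fin.cons_succ, B, c]
  ring

theorem Matrix.det_of_mul_mul {R ι : Type*} [CommRing R] [Fintype ι] [DecidableEq ι]
    (a b : ι → R) (M : ι → ι → R) :
    (of fun i j => a i * b j * M i j).det = (∏ i, a i) * (∏ j, b j) * (of M).det := by
  rw [mul_assoc, ← det_mul_row, ← det_mul_column]
  simp only [of_apply, mul_assoc]

theorem Fin.prod_prod_Ioi_sub_succ {R : Type*} [CommRing R] {n : ℕ} (x : Fin (n + 1) → R) :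
    ∏ i, ∏ j ∈ Ioi i, (x j - x i) =
      (∏ i : Fin n, (x i.succ - x 0)) * ∏ i : Fin n, ∏ j ∈ Ioi i, (x j.succ - x i.succ) := by
  rw [Fin.prod_univ_succ, Fin.prod_Ioi_zero]
  simp only [Fin.prod_Ioi_succ]

theorem Matrix.det_cauchy {K : Type*} [Field K] {n : ℕ} (x y : Fin n → K) (h : ∀ i j, x i ≠ y j) :
    (of fun i j => (x i - y j)⁻¹).det =
      (-1) ^ n.choose 2 * (∏ i, ∏ j ∈ Ioi i, (x j - x i)) * (∏ i, ∏ j ∈ Ioi i, (y j - y i)) /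
        ∏ i, ∏ j, (x i - y j) := by
  induction n with
  | zero => simp
  | succ n ih =>
    have hxy : ∀ i j, x i - y j ≠ 0 := fun i j => sub_ne_zero.2 (h i j)
    have schur : ∀ i j : Fin n,
        (x i.succ - y j.succ)⁻¹ - (x i.succ - y 0)⁻¹ * (x 0 - y j.succ)⁻¹ / (x 0 - y 0)⁻¹ =
          (x i.succ - x 0) / (x i.succ - y 0) * -((y j.succ - y 0) / (x 0 - y j.succ)) *
            (x i.succ - y j.succ)⁻¹ := by
      intro i j
      field_simp [hxy i.succ j.succ, hxy i.succ 0, hxy 0 j.succ, hxy 0 0]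
      ring
    rw [det_succ_eq_mul_det_schur _ (by simpa using hxy 0 0)]
    simp only [of_apply, schur]
    rw [det_of_mul_mul _ _ fun i j : Fin n => (x i.succ - y j.succ)⁻¹, ih _ _ fun i j => h _ _,
      Fin.prod_prod_Ioi_sub_succ, Fin.prod_prod_Ioi_sub_succ, Fin.prod_univ_succ]
    simp only [Fin.prod_univ_succ (fun j => x _ - y j), prod_neg, prod_mul_distrib,
      prod_inv_distrib, div_eq_mul_inv, mul_inv, card_univ, Fintype.card_fin,
      Nat.choose_succ_succ', Nat.choose_one_right, pow_add]
    ring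

theorem vdm_eq_prod_ite {k : ℕ} (W : Fin k → ℂ) :
    vdm W = ∏ i, ∏ j, if i < j then W j - W i else 1 := by
  rw [vdm, prod_filter, Fintype.prod_prod_type]

theorem vdm_eq_prod_Ioi {k : ℕ} (W : Fin k → ℂ) :
    vdm W = ∏ i, ∏ j ∈ Ioi i, (W j - W i) := by
  simp only [vdm_eq_prod_ite, ← prod_filter, filter_lt_eq_Ioi]

theorem vdm_append {m n : ℕ} (u : Fin m → ℂ) (w : Fin n → ℂ) :
    vdm (Fin.append u w) = vdm u * vdm w * vdm2 w u := by
  simp only [vdm_eq_prod_ite, vdm2, Fin.prod_univ_add, Fin.append_left, Fin.append_right]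
  have hcc (i j : Fin m) : Fin.castAdd n i < Fin.castAdd n j ↔ i < j :=
    (Fin.strictMono_castAdd n).lt_iff_lt
  have hcn (i : Fin m) (j : Fin n) : Fin.castAdd n i < Fin.natAdd m j := by
    simp only [Fin.lt_def, Fin.val_castAdd, Fin.val_natAdd]; omega
  have hnc (i : Fin n) (j : Fin m) : ¬ Fin.natAdd m i < Fin.castAdd n j := by
    simp only [Fin.lt_def, Fin.val_castAdd, Fin.val_natAdd]; omega
  simp only [hcc, hcn, hnc, Fin.natAdd_lt_natAdd_iff, if_true, if_false, prod_const_one, one_mul,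
    prod_mul_distrib]
  rw [prod_comm (f := fun i j => w j - u i)]
  ring

theorem vdm2_append_left {m n k : ℕ} (u : Fin m → ℂ) (w : Fin n → ℂ) (z : Fin k → ℂ) :
    vdm2 (Fin.append u w) z = vdm2 u z * vdm2 w z := by
  simp [vdm2, Fin.prod_univ_add]

theorem vdm2_append_right {m n k : ℕ} (z : Fin k → ℂ) (u : Fin m → ℂ) (w : Fin n → ℂ) :
    vdm2 z (Fin.append u w) = vdm2 z u * vdm2 z w := by
  simp [vdm2, Fin.prod_univ_add, prod_mul_distrib]

theorem vdm2_comm {k k' : ℕ} (x : Fin k → ℂ) (y : Fin k' → ℂ) :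
    vdm2 x y = (-1) ^ (k * k') * vdm2 y x := by
  have h : ∀ i j, x i - y j = -(y j - x i) := fun _ _ => (neg_sub _ _).symm
  simp only [vdm2, h, prod_neg, prod_mul_distrib, prod_const, card_univ, Fintype.card_fin,
    ← pow_mul, mul_comm k']
  rw [prod_comm]

/-- The Cauchy-type block determinant identity (Lemma: aux_01). -/
theorem cauchy_block_det
    (m n : ℕ) (u v : Fin m → ℂ) (u' v' : Fin n → ℂ)
    (huv : ∀ i j, u i ≠ v j) (hu'v' : ∀ i j, u' i ≠ v' j)
    (hu'u : ∀ i j, u' i ≠ u j) (hv'v : ∀ i j, v' i ≠ v j)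
    (Ff Gg Ii Jj : ℂ → ℂ) :
    (vdm u * vdm v * vdm u' * vdm v' * vdm2 u' v * vdm2 v' u) /
        (vdm2 u v * vdm2 u' v' * vdm2 u' u * vdm2 v' v) *
        ((∏ i, Ff (u i)) * (∏ i, Gg (v i)) * (∏ i, Ii (u' i)) * ∏ i, Jj (v' i)) =
      (-1 : ℂ) ^ (Nat.choose (n + m) 2 + n + m * n) *
        (Matrix.fromBlocks
          (Matrix.of fun i j => Ff (u i) * Gg (v j) / (u i - v j))
          (Matrix.of fun i j => Ff (u i) * Ii (u' j) / (u i - u' j))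
          (Matrix.of fun i j => Jj (v' i) * Gg (v j) / (v' i - v j))
          (Matrix.of fun i j => Jj (v' i) * Ii (u' j) / (v' i - u' j))).det := by
  set x := Fin.append u v'
  set y := Fin.append v u'
  set a := Fin.append (fun i => Ff (u i)) (fun i => Jj (v' i))
  set b := Fin.append (fun j => Gg (v j)) (fun j => Ii (u' j))
  have hxy : ∀ i j, x i ≠ y j := by
    intro i j
    induction i using Fin.addCases <;> induction j using Fin.addCases <;>
      simp [x, y, huv, (hu'u _ _).symm, hv'v, (hu'v' _ _).symm]
  have hsign : (-1 : ℂ) ^ ((n + m).choose 2 + n + m * n) * (-1) ^ (m + n).choose 2 *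
      (-1) ^ (m * n) * (-1) ^ (n * n) = 1 := by
    rw [← pow_add, ← pow_add, ← pow_add, add_comm n m]
    apply Even.neg_one_pow
    simp only [Nat.even_add, Nat.even_mul]
    tauto
  calc _ = ((-1 : ℂ) ^ ((n + m).choose 2 + n + m * n) * (-1) ^ (m + n).choose 2 *
          (-1) ^ (m * n) * (-1) ^ (n * n)) * _ := by rw [hsign, one_mul]
    _ = (-1 : ℂ) ^ ((n + m).choose 2 + n + m * n) *
          (of fun i j => a i * b j * (x i - y j)⁻¹).det := by
        rw [det_of_mul_mul _ _ fun i j => (x i - y j)⁻¹, det_cauchy _ _ hxy, ← vdm_eq_prod_Ioi,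
          ← vdm_eq_prod_Ioi, ← vdm2.eq_1, vdm_append, vdm_append, vdm2_append_left,
          vdm2_append_right, vdm2_append_right, vdm2_comm u u', vdm2_comm v' u']
        -- `((-1) ^ k)⁻¹ = (-1) ^ k` brings the signs out of the denominator for `ring`.
        simp only [a, b, Fin.prod_univ_add, Fin.append_left, Fin.append_right, div_eq_mul_inv,
          mul_inv, ← inv_pow, inv_neg_one]
        ring
    _ = _ := by
      rw [← det_submatrix_equiv_self finSumFinEquiv]
      congr 2
      ext (i | i) (j | j) <;> simp [a, b, x, y, div_eq_mul_inv]
end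

section
/- Let 1 ≤ N < L be integers, set ρ = N/L and 𝕣₀ = ρ^ρ(1−ρ)^{1−ρ} (real powers), and let z ∈ ℂ with 0 < |z| < 𝕣₀. Then the polynomial q_z(w) = w^N(w+1)^{L−N} − z^L has exactly L distinct complex roots, none of which satisfies Re(w) = −ρ; moreover exactly L−N of the roots satisfy Re(w) < −ρ and exactly N of the roots satisfy Re(w) > −ρ. -/
/-!
Put `ρ = N / L` and `c = z ^ L`. Since `|w|^N |w + 1|^(L-N) = |c| < ρ^N (1 - ρ)^(L-N)`, every root
lies in the disc `|w| < ρ`, where `Re w > -ρ`, or in the disc `|w + 1| < 1 - ρ`, where `Re w < -ρ`.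
On the first disc, with `a = (L - N) / N`, a root is a `w` such that `φ w = w (w + 1)^a` is an
`N`-th root `ζ` of `c`, and `φ w = ζ` means `w = ζ (w + 1)^(-a)`. For `|ζ| < ρ (1 - ρ)^a`, which is
what `|z| < 𝕣₀` gives, the right-hand side is a contraction of the closed disc into the open one,
so each of the `N` values of `ζ` has exactly one preimage: there are `N` roots. The reflection
`w ↦ -1 - w` swaps the two discs and the roles of `N` and `L - N`, giving `L - N` roots in the other.
-/

open Complex Metric Set

theorem finite_and_ncard_pow_eq {N : ℕ} {c : ℂ} (hN : N ≠ 0) (hc : c ≠ 0) :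
    {ζ : ℂ | ζ ^ N = c}.Finite ∧ {ζ : ℂ | ζ ^ N = c}.ncard = N := by
  classical
  have hroots : {ζ : ℂ | ζ ^ N = c} = ↑(Polynomial.nthRootsFinset N c) := by
    ext ζ
    simp [Polynomial.mem_nthRootsFinset (Nat.pos_of_ne_zero hN)]
  have hprim := Complex.isPrimitiveRoot_exp N hN
  refine ⟨hroots ▸ Finset.finite_toSet _, ?_⟩
  rw [hroots, ncard_coe_finset, Polynomial.nthRootsFinset_def,
    Multiset.toFinset_card_of_nodup (hprim.nthRoots_nodup hc), hprim.card_nthRoots,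
    if_pos (IsAlgClosed.exists_pow_nat_eq c (Nat.pos_of_ne_zero hN))]

section FixedPoint

variable {ρ a : ℝ} {ζ w : ℂ}

theorem one_sub_le_norm_add_one (hw : ‖w‖ ≤ ρ) : 1 - ρ ≤ ‖w + 1‖ := by
  have := norm_sub_norm_le (1 : ℂ) (-w)
  rw [norm_one, norm_neg, sub_neg_eq_add, add_comm] at this
  linarith

theorem norm_add_one_cpow_le (hρ : ρ < 1) {b : ℝ} (hb : b ≤ 0) (hw : ‖w‖ ≤ ρ) :
    ‖(w + 1) ^ (b : ℂ)‖ ≤ (1 - ρ) ^ b := by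
  rw [norm_cpow_real]
  exact Real.rpow_le_rpow_of_nonpos (by linarith) (one_sub_le_norm_add_one hw) hb

theorem add_one_mem_slitPlane (hw : ‖w‖ < 1) : w + 1 ∈ slitPlane :=
  add_comm 1 w ▸ mem_slitPlane_of_norm_lt_one hw

theorem lipschitzOnWith_mul_add_one_cpow_neg (hρ : ρ < 1) (ha : 0 ≤ a) :
    LipschitzOnWith (a * ‖ζ‖ * (1 - ρ) ^ (-a - 1)).toNNReal
      (fun w : ℂ ↦ ζ * (w + 1) ^ (-(a : ℂ))) (closedBall 0 ρ) := by
  refine (convex_closedBall (0 : ℂ) ρ).lipschitzOnWith_of_nnnorm_hasDerivWithin_le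
    (f' := fun w ↦ ζ * (-(a : ℂ) * (w + 1) ^ (-(a : ℂ) - 1) * 1)) (fun w hw ↦ ?_) (fun w hw ↦ ?_)
  · have hslit := add_one_mem_slitPlane ((mem_closedBall_zero_iff.1 hw).trans_lt hρ)
    exact ((((hasDerivAt_id w).add_const 1).cpow_const hslit).const_mul ζ).hasDerivWithinAt
  · rw [← norm_toNNReal]
    refine Real.toNNReal_le_toNNReal ?_
    have hcast : -(a : ℂ) - 1 = ((-a - 1 : ℝ) : ℂ) := by push_cast; ring
    have hbound := norm_add_one_cpow_le hρ (b := -a - 1) (by linarith) (mem_closedBall_zero_iff.1 hw)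
    rw [hcast, mul_one, norm_mul, norm_mul, norm_neg, norm_real, Real.norm_of_nonneg ha]
    calc ‖ζ‖ * (a * ‖(w + 1) ^ ((-a - 1 : ℝ) : ℂ)‖)
        ≤ ‖ζ‖ * (a * (1 - ρ) ^ (-a - 1)) := by gcongr
      _ = a * ‖ζ‖ * (1 - ρ) ^ (-a - 1) := by ring

theorem existsUnique_fixedPoint_mul_add_one_cpow_neg (hρ0 : 0 < ρ) (hρ1 : ρ < 1) (ha : 0 ≤ a)
    (haρ : a * ρ ≤ 1 - ρ) (hζ : ‖ζ‖ < ρ * (1 - ρ) ^ a) :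
    ∃! w : ℂ, ‖w‖ < ρ ∧ ζ * (w + 1) ^ (-(a : ℂ)) = w := by
  set T : ℂ → ℂ := fun w ↦ ζ * (w + 1) ^ (-(a : ℂ)) with hT
  have h1ρ : 0 < 1 - ρ := by linarith
  have hζ' : ‖ζ‖ * (1 - ρ) ^ (-a) < ρ := by
    calc ‖ζ‖ * (1 - ρ) ^ (-a) < ρ * (1 - ρ) ^ a * (1 - ρ) ^ (-a) := by gcongr
      _ = ρ := by rw [mul_assoc, ← Real.rpow_add h1ρ, add_neg_cancel, Real.rpow_zero, mul_one]
  have hTnorm : ∀ w : ℂ, ‖w‖ ≤ ρ → ‖T w‖ < ρ := fun w hw ↦ by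
    have hcast : -(a : ℂ) = ((-a : ℝ) : ℂ) := by push_cast; ring
    rw [hT, norm_mul, hcast]
    exact (mul_le_mul_of_nonneg_left (norm_add_one_cpow_le hρ1 (by linarith) hw)
      (norm_nonneg ζ)).trans_lt hζ'
  have hK : a * ‖ζ‖ * (1 - ρ) ^ (-a - 1) < 1 := by
    have hKeq : a * ‖ζ‖ * (1 - ρ) ^ (-a - 1) = a * (‖ζ‖ * (1 - ρ) ^ (-a)) / (1 - ρ) := by
      rw [Real.rpow_sub h1ρ, Real.rpow_one]; ring
    rw [hKeq, div_lt_one h1ρ]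
    rcases ha.eq_or_lt with rfl | ha
    · linarith
    · exact (mul_lt_mul_of_pos_left hζ' ha).trans_le haρ
  set K := a * ‖ζ‖ * (1 - ρ) ^ (-a - 1)
  have hlip : LipschitzOnWith K.toNNReal T (closedBall 0 ρ) :=
    lipschitzOnWith_mul_add_one_cpow_neg hρ1 ha
  have hmaps : MapsTo T (closedBall 0 ρ) (closedBall 0 ρ) := fun w hw ↦
    mem_closedBall_zero_iff.2 (hTnorm w (mem_closedBall_zero_iff.1 hw)).le
  have hcontr : ContractingWith K.toNNReal (hmaps.restrict T _ _) :=
    ⟨Real.toNNReal_lt_one.2 hK, hlip.mapsToRestrict hmaps⟩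
  obtain ⟨w, hw, hfix, -⟩ := hcontr.exists_fixedPoint' isClosed_closedBall.isComplete hmaps
    (mem_closedBall_self hρ0.le) (edist_ne_top _ _)
  refine ⟨w, ⟨hfix ▸ hTnorm w (mem_closedBall_zero_iff.1 hw), hfix⟩, ?_⟩
  rintro v ⟨hv, hvfix⟩
  have hdist := (lipschitzOnWith_iff_dist_le_mul.1 hlip) v
    (mem_closedBall_zero_iff.2 hv.le) w hw
  rw [show T v = v from hvfix, show T w = w from hfix,
    Real.coe_toNNReal K (by positivity)] at hdist
  exact dist_le_zero.1 (by nlinarith [dist_nonneg (x := v) (y := w)])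

theorem existsUnique_mul_add_one_cpow_eq (hρ0 : 0 < ρ) (hρ1 : ρ < 1) (ha : 0 ≤ a)
    (haρ : a * ρ ≤ 1 - ρ) (hζ : ‖ζ‖ < ρ * (1 - ρ) ^ a) :
    ∃! w : ℂ, ‖w‖ < ρ ∧ w * (w + 1) ^ (a : ℂ) = ζ := by
  refine (existsUnique_congr fun w ↦ and_congr_right fun hw ↦ ?_).1
    (existsUnique_fixedPoint_mul_add_one_cpow_neg hρ0 hρ1 ha haρ hζ)
  have hw1 : (w + 1) ^ (a : ℂ) ≠ 0 := by
    rw [Ne, cpow_eq_zero_iff]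
    exact fun h ↦ slitPlane_ne_zero (add_one_mem_slitPlane (hw.trans hρ1)) h.1
  rw [cpow_neg, ← div_eq_mul_inv, div_eq_iff hw1, eq_comm]

end FixedPoint

theorem mul_add_one_cpow_pow {a : ℝ} {N M : ℕ} (hNa : N * a = M) (w : ℂ) :
    (w * (w + 1) ^ (a : ℂ)) ^ N = w ^ N * (w + 1) ^ M := by
  have hcast : (N : ℂ) * (a : ℂ) = (M : ℂ) := by exact_mod_cast hNa
  rw [mul_pow, ← cpow_nat_mul, hcast, cpow_natCast]

theorem finite_and_ncard_roots_norm_lt {N M : ℕ} {ρ : ℝ} {c : ℂ} (hN : N ≠ 0) (hρ0 : 0 < ρ)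
    (hρ1 : ρ < 1) (hMρ : M * ρ ≤ N * (1 - ρ)) (hc0 : c ≠ 0)
    (hc : ‖c‖ < ρ ^ N * (1 - ρ) ^ M) :
    {w : ℂ | w ^ N * (w + 1) ^ M = c ∧ ‖w‖ < ρ}.Finite ∧
      {w : ℂ | w ^ N * (w + 1) ^ M = c ∧ ‖w‖ < ρ}.ncard = N := by
  have hN' : (0 : ℝ) < N := by positivity
  set a : ℝ := M / N
  have hNa : N * a = M := mul_div_cancel₀ _ hN'.ne'
  have ha : 0 ≤ a := by positivity
  have haρ : a * ρ ≤ 1 - ρ := by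
    rw [div_mul_eq_mul_div, div_le_iff₀ hN']; linarith
  have hφ := mul_add_one_cpow_pow hNa
  have hunique : ∀ ζ : ℂ, ζ ^ N = c → ∃! w : ℂ, ‖w‖ < ρ ∧ w * (w + 1) ^ (a : ℂ) = ζ := by
    intro ζ hζ
    refine existsUnique_mul_add_one_cpow_eq hρ0 hρ1 ha haρ ?_
    have hpow : (ρ * (1 - ρ) ^ a) ^ N = ρ ^ N * (1 - ρ) ^ M := by
      rw [mul_pow, ← Real.rpow_mul_natCast (by linarith), mul_comm a, hNa, Real.rpow_natCast]
    rw [← pow_lt_pow_iff_left₀ (norm_nonneg ζ) (by positivity) hN, ← norm_pow, hζ, hpow]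
    exact hc
  have hbij : BijOn (fun w : ℂ ↦ w * (w + 1) ^ (a : ℂ))
      {w : ℂ | w ^ N * (w + 1) ^ M = c ∧ ‖w‖ < ρ} {ζ : ℂ | ζ ^ N = c} := by
    refine ⟨fun w hw ↦ (hφ w).trans hw.1, fun w₁ hw₁ w₂ hw₂ h ↦ ?_, fun ζ hζ ↦ ?_⟩
    · exact (hunique _ ((hφ w₁).trans hw₁.1)).unique ⟨hw₁.2, rfl⟩ ⟨hw₂.2, h.symm⟩
    · obtain ⟨w, ⟨hw, rfl⟩, -⟩ := hunique ζ hζ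
      exact ⟨w, ⟨(hφ w).symm.trans hζ, hw⟩, rfl⟩
  obtain ⟨hfin, hcard⟩ := finite_and_ncard_pow_eq hN hc0
  exact ⟨hbij.finite_iff_finite.2 hfin, hbij.ncard_eq.trans hcard⟩

theorem norm_lt_or_norm_add_one_lt {N M : ℕ} {ρ : ℝ} {c w : ℂ} (hρ0 : 0 ≤ ρ) (hρ1 : ρ ≤ 1)
    (hc : ‖c‖ < ρ ^ N * (1 - ρ) ^ M) (hw : w ^ N * (w + 1) ^ M = c) :
    ‖w‖ < ρ ∨ ‖w + 1‖ < 1 - ρ := by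
  by_contra! ⟨h₁, h₂⟩
  have : ρ ^ N * (1 - ρ) ^ M ≤ ‖c‖ := by
    rw [← hw, norm_mul, norm_pow, norm_pow]
    gcongr
  linarith

theorem neg_lt_re_of_norm_lt {ρ : ℝ} {w : ℂ} (hw : ‖w‖ < ρ) : -ρ < w.re := by
  linarith [neg_abs_le w.re, abs_re_le_norm w]

theorem re_lt_neg_of_norm_add_one_lt {ρ : ℝ} {w : ℂ} (hw : ‖w + 1‖ < 1 - ρ) : w.re < -ρ := by
  have := re_le_norm (w + 1)
  rw [add_re, one_re] at this
  linarith

theorem neg_one_sub_pow_mul_add_one_pow (N M : ℕ) (w : ℂ) :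
    (-1 - w) ^ M * (-1 - w + 1) ^ N = (-1) ^ (N + M) * (w ^ N * (w + 1) ^ M) := by
  rw [show -1 - w + 1 = -w by ring, show -1 - w = -(w + 1) by ring, neg_pow, neg_pow, pow_add]
  ring

section Split

variable {N M : ℕ} {ρ : ℝ} {c : ℂ}

theorem setOf_roots_neg_lt_re (hρ0 : 0 ≤ ρ) (hρ1 : ρ ≤ 1) (hc : ‖c‖ < ρ ^ N * (1 - ρ) ^ M) :
    {w : ℂ | w ^ N * (w + 1) ^ M = c ∧ -ρ < w.re} =
      {w : ℂ | w ^ N * (w + 1) ^ M = c ∧ ‖w‖ < ρ} := by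
  ext w
  refine and_congr_right fun hw ↦ ⟨fun hre ↦ ?_, neg_lt_re_of_norm_lt⟩
  refine (norm_lt_or_norm_add_one_lt hρ0 hρ1 hc hw).resolve_right fun h ↦ ?_
  linarith [re_lt_neg_of_norm_add_one_lt h]

theorem setOf_roots_re_lt_neg (hρ0 : 0 ≤ ρ) (hρ1 : ρ ≤ 1) (hc : ‖c‖ < ρ ^ N * (1 - ρ) ^ M) :
    {w : ℂ | w ^ N * (w + 1) ^ M = c ∧ w.re < -ρ} = (fun w : ℂ ↦ -1 - w) ⁻¹'
      {v : ℂ | v ^ M * (v + 1) ^ N = (-1) ^ (N + M) * c ∧ ‖v‖ < 1 - ρ} := by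
  ext w
  rw [mem_preimage, mem_ofPred_eq, mem_ofPred_eq, neg_one_sub_pow_mul_add_one_pow,
    mul_right_inj' (pow_ne_zero _ (by norm_num)), show -1 - w = -(w + 1) by ring, norm_neg]
  refine and_congr_right fun hw ↦ ⟨fun hre ↦ ?_, re_lt_neg_of_norm_add_one_lt⟩
  refine (norm_lt_or_norm_add_one_lt hρ0 hρ1 hc hw).resolve_left fun h ↦ ?_
  linarith [neg_lt_re_of_norm_lt h]

theorem finite_and_ncard_roots_neg_lt_re (hN : N ≠ 0) (hρ0 : 0 < ρ) (hρ1 : ρ < 1)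
    (hMρ : M * ρ ≤ N * (1 - ρ)) (hc0 : c ≠ 0) (hc : ‖c‖ < ρ ^ N * (1 - ρ) ^ M) :
    {w : ℂ | w ^ N * (w + 1) ^ M = c ∧ -ρ < w.re}.Finite ∧
      {w : ℂ | w ^ N * (w + 1) ^ M = c ∧ -ρ < w.re}.ncard = N := by
  rw [setOf_roots_neg_lt_re hρ0.le hρ1.le hc]
  exact finite_and_ncard_roots_norm_lt hN hρ0 hρ1 hMρ hc0 hc

theorem finite_and_ncard_roots_re_lt_neg (hM : M ≠ 0) (hρ0 : 0 < ρ) (hρ1 : ρ < 1)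
    (hNρ : N * (1 - ρ) ≤ M * ρ) (hc0 : c ≠ 0) (hc : ‖c‖ < ρ ^ N * (1 - ρ) ^ M) :
    {w : ℂ | w ^ N * (w + 1) ^ M = c ∧ w.re < -ρ}.Finite ∧
      {w : ℂ | w ^ N * (w + 1) ^ M = c ∧ w.re < -ρ}.ncard = M := by
  obtain ⟨hfin, hcard⟩ := finite_and_ncard_roots_norm_lt (N := M) (M := N) (ρ := 1 - ρ)
    (c := (-1) ^ (N + M) * c) hM (by linarith) (by linarith) (by rwa [sub_sub_cancel])
    (mul_ne_zero (pow_ne_zero _ (by norm_num)) hc0)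
    (by rwa [norm_mul, norm_pow, norm_neg, norm_one, one_pow, one_mul, sub_sub_cancel, mul_comm])
  have hinj : Function.Injective fun w : ℂ ↦ -1 - w := sub_right_injective
  rw [setOf_roots_re_lt_neg hρ0.le hρ1.le hc]
  exact ⟨hfin.preimage hinj.injOn, (ncard_preimage_of_injective_subset_range hinj
    fun v _ ↦ ⟨-1 - v, sub_sub_cancel _ _⟩).trans hcard⟩

theorem roots_split (hN : N ≠ 0) (hM : M ≠ 0) (hρ0 : 0 < ρ) (hρ1 : ρ < 1)
    (hρ : M * ρ = N * (1 - ρ)) (hc0 : c ≠ 0) (hc : ‖c‖ < ρ ^ N * (1 - ρ) ^ M) :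
    {w : ℂ | w ^ N * (w + 1) ^ M = c}.Finite ∧
    {w : ℂ | w ^ N * (w + 1) ^ M = c}.ncard = N + M ∧
    (∀ w : ℂ, w ^ N * (w + 1) ^ M = c → w.re ≠ -ρ) ∧
    {w : ℂ | w ^ N * (w + 1) ^ M = c ∧ w.re < -ρ}.ncard = M ∧
    {w : ℂ | w ^ N * (w + 1) ^ M = c ∧ -ρ < w.re}.ncard = N := by
  obtain ⟨hfinL, hcardL⟩ := finite_and_ncard_roots_re_lt_neg hM hρ0 hρ1 hρ.ge hc0 hc
  obtain ⟨hfinR, hcardR⟩ := finite_and_ncard_roots_neg_lt_re hN hρ0 hρ1 hρ.le hc0 hc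
  have hre : ∀ w : ℂ, w ^ N * (w + 1) ^ M = c → w.re ≠ -ρ := fun w hw hre ↦
    (norm_lt_or_norm_add_one_lt hρ0.le hρ1.le hc hw).elim
      (fun h ↦ (neg_lt_re_of_norm_lt h).ne' hre) (fun h ↦ (re_lt_neg_of_norm_add_one_lt h).ne hre)
  have hunion : {w : ℂ | w ^ N * (w + 1) ^ M = c} =
      {w : ℂ | w ^ N * (w + 1) ^ M = c ∧ w.re < -ρ} ∪
        {w : ℂ | w ^ N * (w + 1) ^ M = c ∧ -ρ < w.re} := by
    ext w
    simp only [mem_union, mem_ofPred_eq, ← and_or_left]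
    exact ⟨fun hw ↦ ⟨hw, (hre w hw).lt_or_gt⟩, And.left⟩
  have hdisj : Disjoint {w : ℂ | w ^ N * (w + 1) ^ M = c ∧ w.re < -ρ}
      {w : ℂ | w ^ N * (w + 1) ^ M = c ∧ -ρ < w.re} :=
    disjoint_left.2 fun w h₁ h₂ ↦ lt_asymm h₁.2 h₂.2
  refine ⟨hunion ▸ hfinL.union hfinR, ?_, hre, hcardL, hcardR⟩
  rw [hunion, ncard_union_eq hdisj hfinL hfinR, hcardL, hcardR, add_comm]

end Split

theorem rpow_div_natCast_pow {x : ℝ} (hx : 0 ≤ x) (n : ℕ) {L : ℕ} (hL : L ≠ 0) :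
    (x ^ ((n : ℝ) / L)) ^ L = x ^ n := by
  rw [← Real.rpow_mul_natCast hx, div_mul_cancel₀ _ (Nat.cast_ne_zero.2 hL), Real.rpow_natCast]

/-- For `0 < |z| < 𝕣₀ = ρ^ρ(1−ρ)^{1−ρ}` with `ρ = N/L`, the polynomial
`q_z(w) = w^N(w+1)^{L−N} − z^L` has exactly `L` distinct roots, none on the
line `Re(w) = −ρ`; exactly `L−N` of them satisfy `Re(w) < −ρ` and exactly `N`
satisfy `Re(w) > −ρ`. Real powers (`rpow`) are used in the definition of `𝕣₀`. -/
theorem roots_split_left_right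
    (N L : ℕ) (hN : 1 ≤ N) (hNL : N < L)
    (z : ℂ) (hz : z ≠ 0)
    (hzr : ‖z‖ <
      ((N : ℝ) / L) ^ ((N : ℝ) / L) * (1 - (N : ℝ) / L) ^ (1 - (N : ℝ) / L)) :
    {w : ℂ | w ^ N * (w + 1) ^ (L - N) = z ^ L}.Finite ∧
    {w : ℂ | w ^ N * (w + 1) ^ (L - N) = z ^ L}.ncard = L ∧
    (∀ w : ℂ, w ^ N * (w + 1) ^ (L - N) = z ^ L → w.re ≠ -((N : ℝ) / L)) ∧
    {w : ℂ | w ^ N * (w + 1) ^ (L - N) = z ^ L ∧ w.re < -((N : ℝ) / L)}.ncard = L - N ∧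
    {w : ℂ | w ^ N * (w + 1) ^ (L - N) = z ^ L ∧ -((N : ℝ) / L) < w.re}.ncard = N := by
  have hL : L ≠ 0 := by omega
  have hL' : (0 : ℝ) < L := by positivity
  have hρ0 : (0 : ℝ) < N / L := by positivity
  have hρ1 : (N : ℝ) / L < 1 := (div_lt_one hL').2 (by exact_mod_cast hNL)
  have h1ρ : 1 - (N : ℝ) / L = ((L - N : ℕ) : ℝ) / L := by
    rw [Nat.cast_sub hNL.le]; field_simp
  have hc : ‖z ^ L‖ < ((N : ℝ) / L) ^ N * (1 - (N : ℝ) / L) ^ (L - N) := by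
    rw [norm_pow, ← rpow_div_natCast_pow hρ0.le N hL, h1ρ,
      ← rpow_div_natCast_pow (by positivity) (L - N) hL, ← mul_pow, ← h1ρ]
    gcongr
  have hρ : ((L - N : ℕ) : ℝ) * (N / L) = N * (1 - N / L) := by
    rw [h1ρ]; ring
  have := roots_split (by omega) (by omega) hρ0 hρ1 hρ (pow_ne_zero L hz) hc
  rwa [Nat.add_sub_cancel' hNL.le] at this
end

section
/- Let 1 ≤ N < L be integers, set ρ = N/L, and let z be a nonzero complex number with z^L ≠ (−ρ)^N(1−ρ)^{L−N} (equivalently z^L ≠ (−1)^N 𝕣₀^L, where 𝕣₀ = ρ^ρ(1−ρ)^{1−ρ}; in particular this holds whenever |z| ≠ 𝕣₀). Then all roots of the polynomial q_z(w) = w^N(w+1)^{L−N} − z^L are simple, i.e. q_z has exactly L distinct complex roots. -/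
open scoped BigOperators

/-- If `z ≠ 0` and `z^L ≠ (−ρ)^N(1−ρ)^{L−N}` (with `ρ = N/L`), then all roots
of `q_z(w) = w^N(w+1)^{L−N} − z^L` are simple (the root multiset has no
duplicates), i.e. `q_z` has exactly `L` distinct complex roots. -/
theorem roots_simple
    (N L : ℕ) (hN : 1 ≤ N) (hNL : N < L)
    (z : ℂ) (hz : z ≠ 0)
    (hz2 : z ^ L ≠ (-((N : ℂ) / L)) ^ N * (1 - (N : ℂ) / L) ^ (L - N)) :
    (Polynomial.X ^ N * (Polynomial.X + 1) ^ (L - N) -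
        Polynomial.C (z ^ L) : Polynomial ℂ).roots.Nodup ∧
    (Polynomial.X ^ N * (Polynomial.X + 1) ^ (L - N) -
        Polynomial.C (z ^ L) : Polynomial ℂ).roots.toFinset.card = L := by
  set p : Polynomial ℂ :=
    Polynomial.X ^ N * (Polynomial.X + 1) ^ (L - N) - Polynomial.C (z ^ L) with hp
  have hLpos : 0 < L := lt_of_le_of_lt (Nat.zero_le N) hNL
  have hLne : (L : ℂ) ≠ 0 := Nat.cast_ne_zero.mpr hLpos.ne'
  have hm2 : (Polynomial.X + 1 : Polynomial ℂ).Monic := by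
    simpa using Polynomial.monic_X_add_C (1 : ℂ)
  have hm2d : (Polynomial.X + 1 : Polynomial ℂ).natDegree = 1 := by
    simpa using Polynomial.natDegree_X_add_C (1 : ℂ)
  have hmonic : ((Polynomial.X ^ N * (Polynomial.X + 1) ^ (L - N)) : Polynomial ℂ).Monic :=
    (Polynomial.monic_X_pow N).mul (hm2.pow _)
  have hdeg0 : ((Polynomial.X ^ N * (Polynomial.X + 1) ^ (L - N)) : Polynomial ℂ).natDegree = L := by
    rw [Polynomial.natDegree_mul (pow_ne_zero _ Polynomial.X_ne_zero) ((hm2.pow _).ne_zero)]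
    simp [Polynomial.natDegree_pow, Polynomial.natDegree_X, hm2d]
    omega
  have hdegC : (Polynomial.C (z ^ L)).natDegree <
      ((Polynomial.X ^ N * (Polynomial.X + 1) ^ (L - N)) : Polynomial ℂ).natDegree := by
    rw [hdeg0, Polynomial.natDegree_C]; exact hLpos
  have hpm : p.Monic := hmonic.sub_of_left (lt_of_le_of_lt Polynomial.degree_C_le (by
    rw [Polynomial.degree_eq_natDegree hmonic.ne_zero, hdeg0]; exact_mod_cast hLpos))
  have hpne : p ≠ 0 := hpm.ne_zero
  have hpdeg : p.natDegree = L := by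
    rw [hp, Polynomial.natDegree_sub_eq_left_of_natDegree_lt hdegC, hdeg0]
  -- evaluation facts
  have heval : ∀ a : ℂ, p.eval a = a ^ N * (a + 1) ^ (L - N) - z ^ L := by
    intro a; simp [hp]
  have hderiv : ∀ a : ℂ, (Polynomial.derivative p).eval a =
      N * a ^ (N - 1) * (a + 1) ^ (L - N) + (L - N) * a ^ N * (a + 1) ^ (L - N - 1) := by
    intro a
    simp [hp, Polynomial.derivative_pow]
    push_cast [Nat.cast_sub hNL.le]
    ring
  -- key: no common root of p and p'
  have hkey : ∀ a : ℂ, p.IsRoot a → ¬ (Polynomial.derivative p).IsRoot a := by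
    intro a ha hda
    rw [Polynomial.IsRoot, heval, sub_eq_zero] at ha
    rw [Polynomial.IsRoot, hderiv] at hda
    have ha0 : a ≠ 0 := by
      rintro rfl
      rw [zero_pow (by omega), zero_mul] at ha
      exact hz (pow_eq_zero_iff hLpos.ne' |>.mp ha.symm)
    have ha1 : a + 1 ≠ 0 := by
      intro h
      rw [h, zero_pow (by omega), mul_zero] at ha
      exact hz (pow_eq_zero_iff hLpos.ne' |>.mp ha.symm)
    -- from hda, factor out a^(N-1) (a+1)^(L-N-1)
    obtain ⟨c, hc⟩ : ∃ c, N = c + 1 := ⟨N - 1, by omega⟩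
    obtain ⟨b, hb⟩ : ∃ b, L - N = b + 1 := ⟨L - N - 1, by omega⟩
    have hfac : a ^ c * (a + 1) ^ b * ((N : ℂ) * (a + 1) + ((L : ℂ) - N) * a) = 0 := by
      rw [hb, hc] at hda
      simp only [Nat.add_sub_cancel] at hda
      rw [hc]
      push_cast at hda ⊢
      linear_combination hda
    have hlin : (N : ℂ) * (a + 1) + ((L : ℂ) - N) * a = 0 := by
      rcases mul_eq_zero.mp hfac with h | h
      · rcases mul_eq_zero.mp h with h | h
        · exact absurd ((pow_eq_zero_iff'.mp h).1) ha0
        · exact absurd ((pow_eq_zero_iff'.mp h).1) ha1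
      · exact h
    have haval : a = -((N : ℂ) / L) := by
      field_simp
      linear_combination hlin
    apply hz2
    rw [← ha, haval]
    congr 1
    have : -((N : ℂ) / L) + 1 = 1 - (N : ℂ) / L := by ring
    rw [this]
  have hnodup : p.roots.Nodup := by
    rw [Multiset.nodup_iff_count_le_one]
    intro a
    rw [Polynomial.count_roots]
    by_contra h
    push_neg at h
    have := (Polynomial.one_lt_rootMultiplicity_iff_isRoot hpne).mp h
    exact hkey a this.1 this.2
  refine ⟨hnodup, ?_⟩
  rw [Multiset.toFinset_card_of_nodup hnodup, ← hpdeg]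
  exact (Polynomial.splits_iff_card_roots.mp (IsAlgClosed.splits p))
end
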